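/- arXiv:2309.06155 — 3 statements merged into one kernel-verified Lean document; each statement's English description precedes it below -/
import Mathlib

section
/- Let f ∈ L¹(S) and f^{(1)}(e^{iθ}) = f(e^{iθ}) - (P_r * f)(e^{iθ}) for a fixed 0 < r < 1, where P_r * f denotes convolution with the Poisson kernel. Then for every arc I, (1/|I|)∫_I |f^{(1)} - f^{(1)}_I| dθ ≤ 2 sup over arcs I' with |I'| = |I| of (1/|I'|)∫_{I'} |f - f_{I'}| dθ. Consequently, if f ∈ VMO(S) then f^{(1)} ∈ VMO(S). -/
open MeasureTheory Real Set Filter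

/-- Mean of `f` over the arc `[a, a+h]` (functions on the circle are viewed as
`2π`-periodic functions on `ℝ`). -/
noncomputable def circAvg (f : ℝ → ℝ) (a h : ℝ) : ℝ := (∫ θ in a..(a + h), f θ) / h

/-- Mean oscillation of `f` over the arc `[a, a+h]`. -/
noncomputable def circOsc (f : ℝ → ℝ) (a h : ℝ) : ℝ :=
  (∫ θ in a..(a + h), |f θ - circAvg f a h|) / h

/-- `f ∈ BMO(𝕊)`. -/
def IsBMOS (f : ℝ → ℝ) : Prop :=
  Function.Periodic f (2 * π) ∧ LocallyIntegrable f ∧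
    ∃ C, ∀ a h, 0 < h → h ≤ 2 * π → circOsc f a h ≤ C

/-- `f ∈ VMO(𝕊)`. -/
def IsVMOS (f : ℝ → ℝ) : Prop :=
  IsBMOS f ∧ ∀ ε > 0, ∃ δ > 0, ∀ a h, 0 < h → h ≤ δ → circOsc f a h ≤ ε

/-- Poisson kernel of the unit disk: `P_z(e^{iθ}) = (1/2π)(1-|z|²)/|1 - e^{-iθ} z|²`. -/
noncomputable def poissonDisk (z : ℂ) (θ : ℝ) : ℝ :=
  (1 - ‖z‖ ^ 2) / (2 * π * ‖1 - Complex.exp (-(θ : ℂ) * Complex.I) * z‖ ^ 2)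


/-- Poisson kernel on the circle, `P_r(θ) = (1/2π)(1-r²)/(1-2r cos θ + r²)`. -/
noncomputable def poissonCirc (r θ : ℝ) : ℝ :=
  (1 - r ^ 2) / (2 * π * (1 - 2 * r * Real.cos θ + r ^ 2))

/-- Convolution with the Poisson kernel: `(P_r * f)(e^{iθ}) = ∫₀^{2π} P_r(φ) f(e^{i(θ-φ)}) dφ`. -/
noncomputable def poissonConv (f : ℝ → ℝ) (r θ : ℝ) : ℝ :=
  ∫ φ in (0:ℝ)..(2 * π), poissonCirc r φ * f (θ - φ)

/-!
Since `∫ P_r = 1`, `f - P_r * f` is the `P_r(φ) dφ`-average of the differences `f - f(· - φ)`.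
Averaging (Fubini) does not increase the mean absolute deviation over an arc `I`, and the
deviation of `f - f(· - φ)` over `I` is at most that of `f` over `I` plus that of `f` over the
translated arc `I - φ`; each is at most `B |I|` when `B` bounds the mean oscillation of `f` on arcs
of length `|I|`.
-/

section MeanAbsDev

variable {α β : Type*} [MeasurableSpace α] [MeasurableSpace β] {μ : Measure α} {ν : Measure β}

noncomputable def meanAbsDev (μ : Measure α) (g : α → ℝ) : ℝ :=
  ∫ x, |g x - ⨍ y, g y ∂μ| ∂μ

lemma meanAbsDev_nonneg (μ : Measure α) (g : α → ℝ) : 0 ≤ meanAbsDev μ g :=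
  integral_nonneg fun _ => abs_nonneg _

lemma meanAbsDev_const_mul (c : ℝ) (g : α → ℝ) :
    meanAbsDev μ (fun x => c * g x) = |c| * meanAbsDev μ g := by
  have havg : ⨍ y, c * g y ∂μ = c * ⨍ y, g y ∂μ := by
    simp only [average_eq, integral_const_mul, smul_eq_mul]; ring
  simp only [meanAbsDev, havg, ← mul_sub, abs_mul, integral_const_mul]

lemma meanAbsDev_sub_le [IsFiniteMeasure μ] {g₁ g₂ : α → ℝ} (hg₁ : Integrable g₁ μ)
    (hg₂ : Integrable g₂ μ) :
    meanAbsDev μ (fun x => g₁ x - g₂ x) ≤ meanAbsDev μ g₁ + meanAbsDev μ g₂ := by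
  have havg : ⨍ y, (g₁ y - g₂ y) ∂μ = ⨍ y, g₁ y ∂μ - ⨍ y, g₂ y ∂μ := by
    simp only [average_eq, integral_sub hg₁ hg₂, smul_sub]
  have hdev : ∀ g : α → ℝ, Integrable g μ → Integrable (fun x => |g x - ⨍ y, g y ∂μ|) μ :=
    fun g hg => (hg.sub (integrable_const _)).abs
  rw [meanAbsDev, havg, meanAbsDev, meanAbsDev, ← integral_add (hdev _ hg₁) (hdev _ hg₂)]
  refine integral_mono ((hg₁.sub hg₂).sub (integrable_const _)).abs
    ((hdev _ hg₁).add (hdev _ hg₂)) fun x => ?_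
  calc |g₁ x - g₂ x - (⨍ y, g₁ y ∂μ - ⨍ y, g₂ y ∂μ)|
      = |(g₁ x - ⨍ y, g₁ y ∂μ) - (g₂ x - ⨍ y, g₂ y ∂μ)| := by ring_nf
    _ ≤ _ := abs_sub _ _

lemma meanAbsDev_integral_le [IsFiniteMeasure μ] [SFinite ν] {F : α × β → ℝ}
    (hF : Integrable F (μ.prod ν)) :
    meanAbsDev μ (fun x => ∫ y, F (x, y) ∂ν) ≤ ∫ y, meanAbsDev μ (fun x => F (x, y)) ∂ν := by
  set m : β → ℝ := fun y => ⨍ x, F (x, y) ∂μ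
  have hm : Integrable m ν := by
    simpa only [m, average_eq, smul_eq_mul] using hF.integral_prod_right.const_mul _
  have havg : ⨍ x, ∫ y, F (x, y) ∂ν ∂μ = ∫ y, m y ∂ν := by
    simp only [m, average_eq, smul_eq_mul, integral_const_mul,
      integral_integral_swap (f := fun x y => F (x, y)) hF]
  have hD : Integrable (fun p : α × β => F p - m p.2) (μ.prod ν) := hF.sub (hm.comp_snd μ)
  have hpt : ∀ᵐ x ∂μ, |∫ y, F (x, y) ∂ν - ∫ y, m y ∂ν| ≤ ∫ y, |F (x, y) - m y| ∂ν := by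
    filter_upwards [hF.prod_right_ae] with x hx
    rw [← integral_sub hx hm]
    exact abs_integral_le_integral_abs
  calc meanAbsDev μ (fun x => ∫ y, F (x, y) ∂ν)
      ≤ ∫ x, ∫ y, |F (x, y) - m y| ∂ν ∂μ := by
        rw [meanAbsDev, havg]
        exact integral_mono_ae (hF.integral_prod_left.sub (integrable_const _)).abs
          hD.abs.integral_prod_left hpt
    _ = ∫ y, meanAbsDev μ (fun x => F (x, y)) ∂ν := integral_integral_swap hD.abs

end MeanAbsDev

lemma circAvg_eq_setAverage (f : ℝ → ℝ) (a : ℝ) {h : ℝ} (hh : 0 ≤ h) :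
    circAvg f a h = ⨍ θ in Ioc a (a + h), f θ := by
  rw [circAvg, setAverage_eq, intervalIntegral.integral_of_le (by linarith),
    Real.volume_real_Ioc_of_le (by linarith), add_sub_cancel_left, smul_eq_mul, div_eq_inv_mul]

lemma circOsc_eq_meanAbsDev (f : ℝ → ℝ) (a : ℝ) {h : ℝ} (hh : 0 ≤ h) :
    circOsc f a h = meanAbsDev (volume.restrict (Ioc a (a + h))) f / h := by
  rw [circOsc, meanAbsDev, ← circAvg_eq_setAverage f a hh,
    intervalIntegral.integral_of_le (by linarith)]

lemma circOsc_comp_sub_right (f : ℝ → ℝ) (φ a h : ℝ) :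
    circOsc (fun θ => f (θ - φ)) a h = circOsc f (a - φ) h := by
  have hend : a + h - φ = a - φ + h := by ring
  have havg : circAvg (fun θ => f (θ - φ)) a h = circAvg f (a - φ) h := by
    rw [circAvg, circAvg, intervalIntegral.integral_comp_sub_right f, hend]
  rw [circOsc, circOsc, havg,
    intervalIntegral.integral_comp_sub_right (fun t => |f t - circAvg f (a - φ) h|), hend]

section PoissonKernel

variable {r : ℝ}

lemma one_sub_abs_sq_le_poissonCirc_denom (r θ : ℝ) :
    (1 - |r|) ^ 2 ≤ 1 - 2 * r * Real.cos θ + r ^ 2 := by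
  have := neg_abs_le r
  have := le_abs_self r
  nlinarith [Real.cos_le_one θ, Real.neg_one_le_cos θ, sq_abs r, abs_nonneg r]

lemma poissonCirc_denom_pos (hr : |r| < 1) (θ : ℝ) : 0 < 1 - 2 * r * Real.cos θ + r ^ 2 :=
  (pow_pos (sub_pos.2 hr) 2).trans_le (one_sub_abs_sq_le_poissonCirc_denom r θ)

lemma poissonCirc_nonneg (hr : |r| < 1) (θ : ℝ) : 0 ≤ poissonCirc r θ := by
  have hr2 : r ^ 2 < 1 := (sq_lt_one_iff_abs_lt_one r).2 hr
  have := poissonCirc_denom_pos hr θ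
  have := Real.pi_pos
  exact div_nonneg (by linarith) (by positivity)

lemma continuous_poissonCirc (hr : |r| < 1) : Continuous (poissonCirc r) :=
  continuous_const.div (by fun_prop) fun θ => by
    have := poissonCirc_denom_pos hr θ
    have := Real.pi_pos
    positivity

lemma norm_poissonCirc_le (hr : |r| < 1) (θ : ℝ) :
    ‖poissonCirc r θ‖ ≤ (1 - r ^ 2) / (2 * π * (1 - |r|) ^ 2) := by
  have hr2 : r ^ 2 < 1 := (sq_lt_one_iff_abs_lt_one r).2 hr
  have := Real.pi_pos
  rw [Real.norm_of_nonneg (poissonCirc_nonneg hr θ), poissonCirc]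
  gcongr
  exact one_sub_abs_sq_le_poissonCirc_denom r θ

lemma norm_circleMap_sub_ofReal_sq (r θ : ℝ) :
    ‖circleMap 0 1 θ - r‖ ^ 2 = 1 - 2 * r * Real.cos θ + r ^ 2 := by
  rw [← Complex.normSq_eq_norm_sq, Complex.normSq_apply]
  simp [circleMap, Complex.exp_ofReal_mul_I_re, Complex.exp_ofReal_mul_I_im]
  nlinarith [Real.sin_sq_add_cos_sq θ]

lemma poissonKernel_circleMap (r θ : ℝ) :
    poissonKernel 0 r (circleMap 0 1 θ) = 2 * π * poissonCirc r θ := by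
  have := Real.pi_pos
  rw [poissonKernel_def, sub_zero, sub_zero, norm_circleMap_sub_ofReal_sq, poissonCirc]
  simp only [norm_circleMap_zero, abs_one, Complex.norm_real, Real.norm_eq_abs, one_pow, sq_abs]
  field_simp

lemma setIntegral_poissonCirc (hr : |r| < 1) : ∫ θ in Ioc 0 (2 * π), poissonCirc r θ = 1 := by
  rw [← intervalIntegral.integral_of_le (by positivity)]
  have hw : (r : ℂ) ∈ Metric.ball 0 1 := by simpa using hr
  have h := InnerProductSpace.HarmonicOnNhd.circleAverage_poissonKernel_smul
    (f := fun _ => (1 : ℝ)) (c := 0) (R := 1) (InnerProductSpace.harmonicOnNhd_const 1) hw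
  simp only [Real.circleAverage_def, smul_eq_mul, Pi.mul_apply, mul_one,
    poissonKernel_circleMap, intervalIntegral.integral_const_mul] at h
  have := Real.pi_pos
  field_simp at h
  exact h

end PoissonKernel

section Translates

variable {E : Type*} [NormedAddCommGroup E] {f : ℝ → E}

lemma MeasureTheory.LocallyIntegrable.intervalIntegrable (hf : LocallyIntegrable f) (a b : ℝ) :
    IntervalIntegrable f volume a b :=
  (hf.integrableOn_isCompact isCompact_uIcc).intervalIntegrable

lemma intervalIntegrable_comp_sub_left (hf : LocallyIntegrable f) (θ a b : ℝ) :
    IntervalIntegrable (fun φ => f (θ - φ)) volume a b := by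
  simpa using (hf.intervalIntegrable (θ - a) (θ - b)).comp_sub_left θ

lemma intervalIntegrable_comp_sub_right (hf : LocallyIntegrable f) (φ a b : ℝ) :
    IntervalIntegrable (fun θ => f (θ - φ)) volume a b := by
  simpa using (hf.intervalIntegrable (a - φ) (b - φ)).comp_sub_right φ

lemma Function.Periodic.intervalIntegral_comp_sub_left [NormedSpace ℝ E] {T : ℝ}
    (hf : Function.Periodic f T) (θ : ℝ) : ∫ φ in (0:ℝ)..T, f (θ - φ) = ∫ x in (0:ℝ)..T, f x := by
  simpa using hf.intervalIntegral_add_eq (θ - T) 0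

lemma integrable_comp_sub_prod {T : ℝ} (hT : 0 ≤ T) (hper : Function.Periodic f T)
    (hf : LocallyIntegrable f) (a b : ℝ) :
    Integrable (fun p : ℝ × ℝ => f (p.1 - p.2))
      ((volume.restrict (Ioc a b)).prod (volume.restrict (Ioc 0 T))) := by
  have hmeas : AEStronglyMeasurable (fun p : ℝ × ℝ => f (p.1 - p.2))
      ((volume.restrict (Ioc a b)).prod (volume.restrict (Ioc 0 T))) :=
    hf.aestronglyMeasurable.comp_quasiMeasurePreserving
      ((quasiMeasurePreserving_sub_of_right_invariant volume volume).mono_left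
        (Measure.restrict_le_self.absolutelyContinuous.prod
          Measure.restrict_le_self.absolutelyContinuous))
  have hnorm : ∀ θ, ∫ φ in Ioc 0 T, ‖f (θ - φ)‖ = ∫ x in (0:ℝ)..T, ‖f x‖ := fun θ => by
    simpa [← intervalIntegral.integral_of_le hT] using
      (hper.comp norm).intervalIntegral_comp_sub_left θ
  rw [integrable_prod_iff hmeas]
  refine ⟨ae_of_all _ fun θ => (intervalIntegrable_comp_sub_left hf θ 0 T).1, ?_⟩
  simp only [hnorm]
  exact integrable_const _

end Translates

section PoissonConv

variable {f : ℝ → ℝ} {r : ℝ}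

lemma integrableOn_poissonCirc_mul_comp_sub_left (hf : LocallyIntegrable f) (hr : |r| < 1)
    (θ : ℝ) : IntegrableOn (fun φ => poissonCirc r φ * f (θ - φ)) (Ioc 0 (2 * π)) :=
  (intervalIntegrable_comp_sub_left hf θ 0 (2 * π)).1.bdd_mul
    (continuous_poissonCirc hr).aestronglyMeasurable (ae_of_all _ (norm_poissonCirc_le hr))

lemma integrable_poissonCirc_mul_comp_sub_prod (hper : Function.Periodic f (2 * π))
    (hf : LocallyIntegrable f) (hr : |r| < 1) (a b : ℝ) :
    Integrable (fun p : ℝ × ℝ => poissonCirc r p.2 * f (p.1 - p.2))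
      ((volume.restrict (Ioc a b)).prod (volume.restrict (Ioc 0 (2 * π)))) :=
  (integrable_comp_sub_prod (by positivity) hper hf a b).bdd_mul
    ((continuous_poissonCirc hr).comp continuous_snd).aestronglyMeasurable
    (ae_of_all _ fun p => norm_poissonCirc_le hr p.2)

lemma sub_poissonConv_eq_integral (hf : LocallyIntegrable f) (hr : |r| < 1) (θ : ℝ) :
    f θ - poissonConv f r θ = ∫ φ in Ioc 0 (2 * π), poissonCirc r φ * (f θ - f (θ - φ)) := by
  simp only [mul_sub]
  rw [integral_sub ((continuous_poissonCirc hr).integrableOn_Ioc.mul_const _)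
      (integrableOn_poissonCirc_mul_comp_sub_left hf hr θ), integral_mul_const,
    setIntegral_poissonCirc hr, one_mul, poissonConv,
    intervalIntegral.integral_of_le (by positivity)]

lemma periodic_poissonConv (hper : Function.Periodic f (2 * π)) :
    Function.Periodic (poissonConv f r) (2 * π) := fun θ => by
  simp only [poissonConv, add_sub_right_comm, hper _]

lemma locallyIntegrable_poissonConv (hper : Function.Periodic f (2 * π))
    (hf : LocallyIntegrable f) (hr : |r| < 1) : LocallyIntegrable (poissonConv f r) := by
  intro x
  refine ⟨Ioo (x - 1) (x + 1), Ioo_mem_nhds (by linarith) (by linarith), ?_⟩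
  refine IntegrableOn.mono_set ?_ Ioo_subset_Ioc_self
  refine (integrable_poissonCirc_mul_comp_sub_prod hper hf hr _ _).integral_prod_left.congr
    (ae_of_all _ fun θ => ?_)
  rw [poissonConv, intervalIntegral.integral_of_le (by positivity)]

end PoissonConv

section Oscillation

variable {f : ℝ → ℝ} {r h B : ℝ}

lemma meanAbsDev_sub_comp_sub_le (hf : LocallyIntegrable f) (hh : 0 < h)
    (hB : ∀ a, circOsc f a h ≤ B) (a φ : ℝ) :
    meanAbsDev (volume.restrict (Ioc a (a + h))) (fun θ => f θ - f (θ - φ)) ≤ 2 * B * h := by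
  have hosc : ∀ (g : ℝ → ℝ) (a' : ℝ),
      meanAbsDev (volume.restrict (Ioc a' (a' + h))) g = h * circOsc g a' h := fun g a' => by
    rw [circOsc_eq_meanAbsDev g a' hh.le]; field_simp
  calc meanAbsDev (volume.restrict (Ioc a (a + h))) (fun θ => f θ - f (θ - φ))
      ≤ meanAbsDev (volume.restrict (Ioc a (a + h))) f
        + meanAbsDev (volume.restrict (Ioc a (a + h))) (fun θ => f (θ - φ)) :=
        meanAbsDev_sub_le (hf.intervalIntegrable a (a + h)).1
          (intervalIntegrable_comp_sub_right hf φ a (a + h)).1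
    _ = h * circOsc f a h + h * circOsc f (a - φ) h := by
        rw [hosc, hosc, circOsc_comp_sub_right]
    _ ≤ h * B + h * B := by gcongr <;> exact hB _
    _ = 2 * B * h := by ring

lemma circOsc_sub_poissonConv_le (hper : Function.Periodic f (2 * π)) (hf : LocallyIntegrable f)
    (hr : |r| < 1) (hh : 0 < h) (hB : ∀ a, circOsc f a h ≤ B) (a : ℝ) :
    circOsc (fun θ => f θ - poissonConv f r θ) a h ≤ 2 * B := by
  set μ := volume.restrict (Ioc a (a + h))
  have hP : IntegrableOn (poissonCirc r) (Ioc 0 (2 * π)) :=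
    (continuous_poissonCirc hr).integrableOn_Ioc
  have hF : Integrable (fun p : ℝ × ℝ => poissonCirc r p.2 * (f p.1 - f (p.1 - p.2)))
      (μ.prod (volume.restrict (Ioc 0 (2 * π)))) :=
    (((hf.intervalIntegrable a (a + h)).1.mul_prod hP).sub
      (integrable_poissonCirc_mul_comp_sub_prod hper hf hr a (a + h))).congr
      (ae_of_all _ fun p => by simp only [Pi.sub_apply]; ring)
  rw [circOsc_eq_meanAbsDev _ a hh.le, div_le_iff₀ hh]
  calc meanAbsDev μ (fun θ => f θ - poissonConv f r θ)
      = meanAbsDev μ (fun θ => ∫ φ in Ioc 0 (2 * π), poissonCirc r φ * (f θ - f (θ - φ))) := by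
        simp only [sub_poissonConv_eq_integral hf hr]
    _ ≤ ∫ φ in Ioc 0 (2 * π), meanAbsDev μ (fun θ => poissonCirc r φ * (f θ - f (θ - φ))) :=
        meanAbsDev_integral_le hF
    _ ≤ ∫ φ in Ioc 0 (2 * π), poissonCirc r φ * (2 * B * h) := by
        refine integral_mono_of_nonneg (ae_of_all _ fun φ => meanAbsDev_nonneg _ _)
          (hP.mul_const _) (ae_of_all _ fun φ => ?_)
        dsimp only
        rw [meanAbsDev_const_mul, abs_of_nonneg (poissonCirc_nonneg hr φ)]
        exact mul_le_mul_of_nonneg_left (meanAbsDev_sub_comp_sub_le hf hh hB a φ)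
          (poissonCirc_nonneg hr φ)
    _ = 2 * B * h := by rw [integral_mul_const, setIntegral_poissonCirc hr, one_mul]

end Oscillation

/-- For `f ∈ L¹(𝕊)` and `f⁽¹⁾ = f - P_r * f`, the mean oscillation of `f⁽¹⁾` over any arc `I`
is at most twice the supremum of the mean oscillations of `f` over arcs of the same length.
Consequently, if `f ∈ VMO(𝕊)` then `f⁽¹⁾ ∈ VMO(𝕊)`. -/
theorem osc_sub_poissonConv (f : ℝ → ℝ) (r : ℝ) (hper : Function.Periodic f (2 * π))
    (hint : LocallyIntegrable f) (hr0 : 0 < r) (hr1 : r < 1) :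
    (∀ a h B, 0 < h → h ≤ 2 * π → (∀ a', circOsc f a' h ≤ B) →
        circOsc (fun θ => f θ - poissonConv f r θ) a h ≤ 2 * B) ∧
      (IsVMOS f → IsVMOS (fun θ => f θ - poissonConv f r θ)) := by
  have hr : |r| < 1 := abs_lt.2 ⟨by linarith, hr1⟩
  refine ⟨fun a h B hh _ hB => circOsc_sub_poissonConv_le hper hint hr hh hB a, ?_⟩
  rintro ⟨⟨-, -, C, hC⟩, hvmo⟩
  refine ⟨⟨hper.sub (periodic_poissonConv hper),
    hint.sub (locallyIntegrable_poissonConv hper hint hr),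
    2 * C, fun a h hh h2π => circOsc_sub_poissonConv_le hper hint hr hh (hC · h hh h2π) a⟩,
    fun ε hε => ?_⟩
  obtain ⟨δ, hδ, hoscδ⟩ := hvmo (ε / 2) (half_pos hε)
  refine ⟨δ, hδ, fun a h hh hhδ => ?_⟩
  linarith [circOsc_sub_poissonConv_le hper hint hr hh (hoscδ · h hh hhδ) a]
end

section
/- For φ ∈ BMO(ℝ^n), φ ∈ VMO(ℝ^n) if and only if φ lies in the BMO-closure of UC(ℝ^n) ∩ BMO(ℝ^n), the uniformly continuous functions of bounded mean oscillation. -/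
/-!
If `φ ∈ VMO`, choose `δ` so that every cube of side at most `3δ` has oscillation at most `ε`.
Let `g` be the moving average of `φ` over cubes of side `δ`, and `ψ` the moving average of `g`.
Then `g` is continuous and varies by `O(3ⁿ ε)` between points that are `2δ`-close in every
coordinate. Averaging once more makes this uniform continuity of `ψ`, because cubes with nearby
corners differ by a set of small measure. On cubes of side at most `δ`, both `φ` and `ψ` have
small oscillation. A larger cube of side `l` is covered by `O((l/δ)ⁿ)` cells of side `2δ`, and
on each cell `∫ |φ - g| = O(6ⁿ δⁿ ε)`. Hence `‖φ - ψ‖_* = O(12ⁿ ε)`.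

Conversely, a uniformly continuous `ψ` has small oscillation on small cubes. Since oscillation is
subadditive, `osc φ ≤ ‖φ - ψ‖_* + osc ψ` on every cube.
-/

open MeasureTheory Real Set Filter

/-- Open axis-parallel cube with corner `c` and side length `l`. -/
def cube {n : ℕ} (c : EuclideanSpace ℝ (Fin n)) (l : ℝ) : Set (EuclideanSpace ℝ (Fin n)) :=
  {x | ∀ i, x i ∈ Set.Ioo (c i) (c i + l)}

/-- Mean of `f` over the cube with corner `c` and side length `l`. -/
noncomputable def cubeAvg {n : ℕ} (f : EuclideanSpace ℝ (Fin n) → ℝ)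
    (c : EuclideanSpace ℝ (Fin n)) (l : ℝ) : ℝ :=
  (∫ x in cube c l, f x) / l ^ n

/-- Mean oscillation of `f` over the cube with corner `c` and side length `l`. -/
noncomputable def cubeOsc {n : ℕ} (f : EuclideanSpace ℝ (Fin n) → ℝ)
    (c : EuclideanSpace ℝ (Fin n)) (l : ℝ) : ℝ :=
  (∫ x in cube c l, |f x - cubeAvg f c l|) / l ^ n

/-- `f ∈ BMO(ℝⁿ)`. -/
def IsBMO {n : ℕ} (f : EuclideanSpace ℝ (Fin n) → ℝ) : Prop :=
  LocallyIntegrable f ∧ ∃ C, ∀ c l, 0 < l → cubeOsc f c l ≤ C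

/-- `f ∈ VMO(ℝⁿ)`. -/
def IsVMO {n : ℕ} (f : EuclideanSpace ℝ (Fin n) → ℝ) : Prop :=
  IsBMO f ∧ ∀ ε > (0 : ℝ), ∃ δ > (0 : ℝ), ∀ c l, 0 < l → l ≤ δ → cubeOsc f c l ≤ ε

/-- The `BMO` seminorm `‖f‖_*`. -/
noncomputable def bmoNorm {n : ℕ} (f : EuclideanSpace ℝ (Fin n) → ℝ) : ℝ :=
  sInf {C : ℝ | 0 ≤ C ∧ ∀ c l, 0 < l → cubeOsc f c l ≤ C}


open scoped symmDiff Topology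

section Integral

variable {α : Type*} [MeasurableSpace α] {μ : Measure α} {f : α → ℝ}

lemma abs_setIntegral_sub_setIntegral_le {s t : Set α} (hs : MeasurableSet s)
    (ht : MeasurableSet t) (hfs : IntegrableOn f s μ) (hft : IntegrableOn f t μ) :
    |∫ x in s, f x ∂μ - ∫ x in t, f x ∂μ| ≤ ∫ x in s ∆ t, |f x| ∂μ := by
  rw [← integral_inter_add_sdiff ht hfs, ← integral_inter_add_sdiff hs hft, inter_comm,
    add_sub_add_left_eq_sub, Set.symmDiff_def,
    setIntegral_union disjoint_sdiff_sdiff (ht.diff hs) (hfs.mono_set sdiff_subset).abs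
      (hft.mono_set sdiff_subset).abs]
  calc _ ≤ |∫ x in s \ t, f x ∂μ| + |∫ x in t \ s, f x ∂μ| := abs_sub _ _
    _ ≤ _ := add_le_add abs_integral_le_integral_abs abs_integral_le_integral_abs

lemma setIntegral_le_sum_of_subset_iUnion {ι : Type*} [Fintype ι] {s : Set α} {t : ι → Set α}
    (hf : ∀ x, 0 ≤ f x) (hft : ∀ i, IntegrableOn f (t i) μ) (hst : s ⊆ ⋃ i, t i) :
    ∫ x in s, f x ∂μ ≤ ∑ i, ∫ x in t i, f x ∂μ := by
  have hs : IntegrableOn f s μ := (integrableOn_finite_iUnion.2 hft).mono_set hst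
  rw [← ENNReal.ofReal_le_ofReal_iff (Finset.sum_nonneg fun i _ => integral_nonneg hf),
    ENNReal.ofReal_sum_of_nonneg fun i _ => integral_nonneg hf,
    ofReal_integral_eq_lintegral_ofReal hs (.of_forall hf)]
  calc ∫⁻ x in s, ENNReal.ofReal (f x) ∂μ ≤ ∫⁻ x in ⋃ i, t i, ENNReal.ofReal (f x) ∂μ :=
        lintegral_mono_set hst
    _ ≤ ∑' i, ∫⁻ x in t i, ENNReal.ofReal (f x) ∂μ := lintegral_iUnion_le _ _
    _ = ∑ i, ENNReal.ofReal (∫ x in t i, f x ∂μ) := by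
        rw [tsum_fintype]
        exact Finset.sum_congr rfl fun i _ =>
          (ofReal_integral_eq_lintegral_ofReal (hft i) (.of_forall hf)).symm

end Integral

variable {n : ℕ}

section Cube

variable {c x y : EuclideanSpace ℝ (Fin n)} {l : ℝ}

lemma mem_cube_iff_sub_mem_cube_zero : x ∈ cube c l ↔ x - c ∈ cube 0 l := by
  simp only [cube, mem_ofPred_eq, mem_Ioo, PiLp.sub_apply, PiLp.zero_apply, zero_add, sub_pos,
    sub_lt_iff_lt_add']

lemma cube_eq_preimage_sub (c : EuclideanSpace ℝ (Fin n)) (l : ℝ) :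
    cube c l = (· - c) ⁻¹' cube 0 l :=
  Set.ext fun _ => mem_cube_iff_sub_mem_cube_zero

lemma isOpen_cube (c : EuclideanSpace ℝ (Fin n)) (l : ℝ) : IsOpen (cube c l) := by
  simp only [cube, ofPred_forall]
  exact isOpen_iInter_of_finite fun i => isOpen_Ioo.preimage (by fun_prop)

lemma measurableSet_cube (c : EuclideanSpace ℝ (Fin n)) (l : ℝ) : MeasurableSet (cube c l) :=
  (isOpen_cube c l).measurableSet

lemma volume_cube (c : EuclideanSpace ℝ (Fin n)) (l : ℝ) :
    volume (cube c l) = ENNReal.ofReal l ^ n := by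
  have : cube c l = (MeasurableEquiv.toLp 2 (Fin n → ℝ)).symm ⁻¹'
      univ.pi fun i => Ioo (c i) (c i + l) := by
    ext; simp [cube, MeasurableEquiv.coe_toLp_symm]
  rw [this, (EuclideanSpace.volume_preserving_symm_measurableEquiv_toLp (Fin n)).measure_preimage
    (MeasurableSet.univ_pi fun _ => measurableSet_Ioo).nullMeasurableSet, volume_pi_pi]
  simp [Real.volume_Ioo]

lemma volume_cube_ne_top (c : EuclideanSpace ℝ (Fin n)) (l : ℝ) : volume (cube c l) ≠ ⊤ := by
  simp [volume_cube]

lemma measureReal_cube (c : EuclideanSpace ℝ (Fin n)) (hl : 0 ≤ l) :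
    volume.real (cube c l) = l ^ n := by
  simp [measureReal_def, volume_cube, ENNReal.toReal_ofReal hl]

lemma cube_subset_cube {c' : EuclideanSpace ℝ (Fin n)} {l' : ℝ}
    (h : ∀ i, c' i ≤ c i ∧ c i + l ≤ c' i + l') : cube c l ⊆ cube c' l' := fun _ hx i =>
  ⟨(h i).1.trans_lt (hx i).1, (hx i).2.trans_le (h i).2⟩

lemma abs_sub_lt_of_mem_cube (hx : x ∈ cube c l) (hy : y ∈ cube c l) (i : Fin n) :
    |x i - y i| < l := by
  obtain ⟨hx₁, hx₂⟩ := hx i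
  obtain ⟨hy₁, hy₂⟩ := hy i
  exact abs_sub_lt_iff.2 ⟨by linarith, by linarith⟩

lemma dist_le_of_mem_cube (hl : 0 ≤ l) (hx : x ∈ cube c l) (hy : y ∈ cube c l) :
    dist x y ≤ √n * l := by
  calc dist x y = √(∑ i, dist (x i) (y i) ^ 2) := EuclideanSpace.dist_eq x y
    _ ≤ √(∑ _i : Fin n, l ^ 2) := by
      gcongr with i
      rw [Real.dist_eq]
      exact (abs_sub_lt_of_mem_cube hx hy i).le
    _ = √n * l := by simp [Real.sqrt_mul, Real.sqrt_sq hl]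

lemma isBounded_cube (c : EuclideanSpace ℝ (Fin n)) (l : ℝ) : Bornology.IsBounded (cube c l) :=
  (Metric.isBounded_iff.2 ⟨_, fun _ hx _ hy => dist_le_of_mem_cube (abs_nonneg l) hx hy⟩).subset
    (cube_subset_cube fun _ => ⟨le_rfl, by grw [le_abs_self l]⟩)

lemma _root_.MeasureTheory.LocallyIntegrable.integrableOn_cube {f : EuclideanSpace ℝ (Fin n) → ℝ}
    (hf : LocallyIntegrable f) (c : EuclideanSpace ℝ (Fin n)) (l : ℝ) :
    IntegrableOn f (cube c l) :=
  (hf.integrableOn_isCompact (isBounded_cube c l).isCompact_closure).mono_set subset_closure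

/-- Cells of side `2δ` on a grid of step `δ`: the overlap lets open cells cover the open cube. -/
lemma cube_subset_iUnion_cube {δ : ℝ} (hδ : 0 < δ) (c : EuclideanSpace ℝ (Fin n)) (l : ℝ) :
    cube c l ⊆ ⋃ k : Fin n → Fin ⌈l / δ⌉₊,
      cube (WithLp.toLp 2 fun i => c i + δ * ((k i : ℕ) - 1)) (2 * δ) := by
  intro x hx
  have hpos : ∀ i, 0 ≤ (x i - c i) / δ := fun i => div_nonneg (sub_pos.2 (hx i).1).le hδ.le
  have hlt : ∀ i, ⌊(x i - c i) / δ⌋₊ < ⌈l / δ⌉₊ := fun i =>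
    (Nat.floor_lt (hpos i)).2 <| lt_of_lt_of_le
      (div_lt_div_of_pos_right (by linarith [(hx i).2]) hδ) (Nat.le_ceil _)
  refine mem_iUnion.2 ⟨fun i => ⟨_, hlt i⟩, fun i => ?_⟩
  have h₁ := (le_div_iff₀ hδ).1 (Nat.floor_le (hpos i))
  have h₂ := (div_lt_iff₀ hδ).1 (Nat.lt_floor_add_one ((x i - c i) / δ))
  simp only [mem_Ioo]
  constructor <;> linarith

lemma volume_cube_symmDiff_cube (a b : EuclideanSpace ℝ (Fin n)) (l : ℝ) :
    volume (cube a l ∆ cube b l) = volume (cube (a - b) l ∆ cube 0 l) := by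
  have shift : ∀ c, cube c l = (· - b) ⁻¹' cube (c - b) l := fun c => ext fun _ => by
    rw [mem_preimage, mem_cube_iff_sub_mem_cube_zero, mem_cube_iff_sub_mem_cube_zero (c := c - b),
      sub_sub_sub_cancel_right]
  rw [shift a, shift b, sub_self, ← preimage_symmDiff,
    (measurePreserving_sub_right volume b).measure_preimage
      ((measurableSet_cube _ _).symmDiff (measurableSet_cube _ _)).nullMeasurableSet]

lemma tendsto_volume_cube_symmDiff_cube (x : EuclideanSpace ℝ (Fin n)) (l : ℝ) :
    Tendsto (fun a => volume (cube a l ∆ cube x l)) (𝓝 x) (𝓝 0) := by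
  let shift : C(EuclideanSpace ℝ (Fin n), C(EuclideanSpace ℝ (Fin n), EuclideanSpace ℝ (Fin n))) :=
    ContinuousMap.curry ⟨fun p => p.2 - p.1, by fun_prop⟩
  refine (tendsto_measure_symmDiff_preimage_nhds_zero (shift.continuous.tendsto x)
    (.of_forall fun a => measurePreserving_sub_right volume a)
    (measurePreserving_sub_right volume x) (measurableSet_cube 0 l).nullMeasurableSet
    (volume_cube_ne_top 0 l)).congr fun a => ?_
  rw [cube_eq_preimage_sub a, cube_eq_preimage_sub x]
  rfl

lemma continuous_setIntegral_cube {f : EuclideanSpace ℝ (Fin n) → ℝ} (hf : LocallyIntegrable f)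
    (l : ℝ) : Continuous fun x => ∫ y in cube x l, f y := by
  refine continuous_iff_continuousAt.2 fun x => ?_
  -- `K` contains `cube a l` for all `a` near `x`; then use absolute continuity of `∫ |f|` on `K`
  set K := cube (x - WithLp.toLp 2 fun _ => 1) (l + 2)
  have hK : ∀ᶠ a in 𝓝 x, cube a l ⊆ K := by
    filter_upwards [Metric.ball_mem_nhds x one_pos] with a ha
    refine cube_subset_cube fun i => ?_
    have := abs_lt.1 ((PiLp.dist_apply_le a x i).trans_lt ha)
    simp only [PiLp.sub_apply] at this ⊢
    constructor <;> linarith [this.1, this.2]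
  have hsymm : ∀ᶠ a in 𝓝 x, ∫ y in cube a l ∆ cube x l, |f y| =
      ∫ y in cube a l ∆ cube x l, |f y| ∂volume.restrict K := by
    filter_upwards [hK] with a ha
    rw [Measure.restrict_restrict ((measurableSet_cube a l).symmDiff (measurableSet_cube x l)),
      inter_eq_left.2 (symmDiff_subset_union.trans (union_subset ha (mem_of_mem_nhds hK)))]
  rw [ContinuousAt, tendsto_iff_norm_sub_tendsto_zero]
  have hfK : IntegrableOn f K := hf.integrableOn_cube _ _
  refine squeeze_zero' (.of_forall fun _ => norm_nonneg _) ?_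
    (hfK.abs.tendsto_setIntegral_nhds_zero (s := fun a => cube a l ∆ cube x l) ?_)
  · filter_upwards [hsymm] with a ha
    rw [← ha]
    exact abs_setIntegral_sub_setIntegral_le (measurableSet_cube a l) (measurableSet_cube x l)
      (hf.integrableOn_cube a l) (hf.integrableOn_cube x l)
  · exact tendsto_of_tendsto_of_tendsto_of_le_of_le tendsto_const_nhds
      (tendsto_volume_cube_symmDiff_cube x l) (fun _ => zero_le)
      fun _ => Measure.restrict_apply_le _ _

end Cube

section Oscillation

variable {f g : EuclideanSpace ℝ (Fin n) → ℝ} {c : EuclideanSpace ℝ (Fin n)} {l a M : ℝ}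

lemma integrableOn_cube_const (c : EuclideanSpace ℝ (Fin n)) (l a : ℝ) :
    IntegrableOn (fun _ => a) (cube c l) :=
  integrableOn_const (volume_cube_ne_top c l)

lemma integrableOn_abs_sub_const (hf : IntegrableOn f (cube c l)) (a : ℝ) :
    IntegrableOn (fun x => |f x - a|) (cube c l) :=
  (hf.sub (integrableOn_cube_const c l a)).abs

lemma setIntegral_cube_const (hl : 0 ≤ l) (a : ℝ) : ∫ _ in cube c l, a = l ^ n * a := by
  rw [setIntegral_const, measureReal_cube c hl, smul_eq_mul]

lemma cubeAvg_const (hl : 0 < l) (a : ℝ) : cubeAvg (fun _ => a) c l = a := by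
  rw [cubeAvg, setIntegral_cube_const hl.le, mul_div_cancel_left₀ a (by positivity)]

lemma cubeAvg_add (hf : IntegrableOn f (cube c l)) (hg : IntegrableOn g (cube c l)) :
    cubeAvg (fun x => f x + g x) c l = cubeAvg f c l + cubeAvg g c l := by
  rw [cubeAvg, integral_add hf hg, add_div, cubeAvg, cubeAvg]

lemma cubeAvg_sub (hf : IntegrableOn f (cube c l)) (hg : IntegrableOn g (cube c l)) :
    cubeAvg (fun x => f x - g x) c l = cubeAvg f c l - cubeAvg g c l := by
  rw [cubeAvg, integral_sub hf hg, sub_div, cubeAvg, cubeAvg]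

lemma cubeAvg_le_cubeAvg (hl : 0 < l) (hf : IntegrableOn f (cube c l))
    (hg : IntegrableOn g (cube c l)) (h : ∀ x ∈ cube c l, f x ≤ g x) :
    cubeAvg f c l ≤ cubeAvg g c l :=
  div_le_div_of_nonneg_right (setIntegral_mono_on hf hg (measurableSet_cube c l) h)
    (by positivity)

lemma abs_cubeAvg_le (hl : 0 < l) : |cubeAvg f c l| ≤ cubeAvg (fun x => |f x|) c l := by
  rw [cubeAvg, cubeAvg, abs_div, abs_of_pos (by positivity : (0 : ℝ) < l ^ n)]
  gcongr
  exact abs_integral_le_integral_abs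

lemma abs_cubeAvg_sub_le (hl : 0 < l) (hf : IntegrableOn f (cube c l)) (a : ℝ) :
    |cubeAvg f c l - a| ≤ cubeAvg (fun x => |f x - a|) c l := by
  rw [← cubeAvg_const hl a, ← cubeAvg_sub hf (integrableOn_cube_const c l a), cubeAvg_const hl]
  exact abs_cubeAvg_le hl

lemma abs_cubeAvg_sub_le_of_forall (hl : 0 < l) (hf : IntegrableOn f (cube c l))
    (h : ∀ x ∈ cube c l, |f x - a| ≤ M) : |cubeAvg f c l - a| ≤ M :=
  (abs_cubeAvg_sub_le hl hf a).trans <| (cubeAvg_le_cubeAvg hl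
    (integrableOn_abs_sub_const hf a) (integrableOn_cube_const c l M) h).trans_eq
    (cubeAvg_const hl M)

lemma cubeOsc_nonneg (hl : 0 < l) : 0 ≤ cubeOsc f c l :=
  div_nonneg (integral_nonneg fun _ => abs_nonneg _) (by positivity)

lemma cubeOsc_eq_cubeAvg : cubeOsc f c l = cubeAvg (fun x => |f x - cubeAvg f c l|) c l := rfl

lemma setIntegral_abs_sub_cubeAvg (hl : 0 < l) :
    ∫ x in cube c l, |f x - cubeAvg f c l| = l ^ n * cubeOsc f c l := by
  rw [cubeOsc, mul_div_cancel₀ _ (by positivity)]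

lemma cubeOsc_le_of_forall (hl : 0 < l) (hf : IntegrableOn f (cube c l))
    (h : ∀ x ∈ cube c l, ∀ y ∈ cube c l, |f x - f y| ≤ M) : cubeOsc f c l ≤ M := by
  have hM : ∀ x ∈ cube c l, |f x - cubeAvg f c l| ≤ M := fun x hx => by
    rw [abs_sub_comm]
    exact abs_cubeAvg_sub_le_of_forall hl hf fun y hy => h y hy x hx
  exact (cubeAvg_le_cubeAvg hl (integrableOn_abs_sub_const hf _)
    (integrableOn_cube_const c l M) hM).trans_eq (cubeAvg_const hl M)

lemma cubeOsc_le_two_mul (hl : 0 < l) (hf : IntegrableOn f (cube c l)) (a : ℝ) :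
    cubeOsc f c l ≤ 2 * cubeAvg (fun x => |f x - a|) c l := by
  have hfa := integrableOn_abs_sub_const hf a
  calc cubeOsc f c l ≤ cubeAvg (fun x => |f x - a| + |a - cubeAvg f c l|) c l :=
        cubeAvg_le_cubeAvg hl (integrableOn_abs_sub_const hf _)
          (hfa.add (integrableOn_cube_const c l _)) fun x _ => abs_sub_le _ _ _
    _ = cubeAvg (fun x => |f x - a|) c l + |cubeAvg f c l - a| := by
        rw [cubeAvg_add hfa (integrableOn_cube_const c l _), cubeAvg_const hl, abs_sub_comm a]
    _ ≤ 2 * cubeAvg (fun x => |f x - a|) c l := by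
        linarith [abs_cubeAvg_sub_le hl hf a]

lemma cubeOsc_add_le (hl : 0 < l) (hf : IntegrableOn f (cube c l))
    (hg : IntegrableOn g (cube c l)) :
    cubeOsc (fun x => f x + g x) c l ≤ cubeOsc f c l + cubeOsc g c l := by
  have hf' := integrableOn_abs_sub_const hf (cubeAvg f c l)
  have hg' := integrableOn_abs_sub_const hg (cubeAvg g c l)
  rw [cubeOsc_eq_cubeAvg, cubeOsc_eq_cubeAvg, cubeOsc_eq_cubeAvg, ← cubeAvg_add hf' hg',
    cubeAvg_add hf hg]
  refine cubeAvg_le_cubeAvg hl (integrableOn_abs_sub_const (hf.add hg) _)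
    (hf'.add hg') fun x _ => ?_
  rw [add_sub_add_comm]
  exact abs_add_le _ _

lemma cubeOsc_neg : cubeOsc (fun x => -f x) c l = cubeOsc f c l := by
  have : cubeAvg (fun x => -f x) c l = -cubeAvg f c l := by
    rw [cubeAvg, cubeAvg, integral_neg, neg_div]
  simp only [cubeOsc, this, neg_sub_neg, abs_sub_comm (cubeAvg f c l)]

lemma cubeOsc_sub_le (hl : 0 < l) (hf : IntegrableOn f (cube c l))
    (hg : IntegrableOn g (cube c l)) :
    cubeOsc (fun x => f x - g x) c l ≤ cubeOsc f c l + cubeOsc g c l := by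
  simpa only [sub_eq_add_neg, cubeOsc_neg] using
    cubeOsc_add_le (g := fun x => -g x) hl hf hg.neg

lemma abs_cubeAvg_sub_cubeAvg_le_of_subset {b x : EuclideanSpace ℝ (Fin n)} {δ L : ℝ}
    (hδ : 0 < δ) (hL : 0 < L) (hsub : cube x δ ⊆ cube b L) (hf : IntegrableOn f (cube b L)) :
    |cubeAvg f x δ - cubeAvg f b L| ≤ (L / δ) ^ n * cubeOsc f b L := by
  calc |cubeAvg f x δ - cubeAvg f b L|
      ≤ (∫ y in cube x δ, |f y - cubeAvg f b L|) / δ ^ n :=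
        abs_cubeAvg_sub_le hδ (hf.mono_set hsub) _
    _ ≤ (∫ y in cube b L, |f y - cubeAvg f b L|) / δ ^ n := by
        gcongr
        exacts [.of_forall fun _ => abs_nonneg _, integrableOn_abs_sub_const hf _]
    _ = (L / δ) ^ n * cubeOsc f b L := by
        rw [setIntegral_abs_sub_cubeAvg hL, div_pow]; ring

end Oscillation

section BMO

variable {f g : EuclideanSpace ℝ (Fin n) → ℝ}

lemma cubeOsc_le_bmoNorm (hf : IsBMO f) {c : EuclideanSpace ℝ (Fin n)} {l : ℝ} (hl : 0 < l) :
    cubeOsc f c l ≤ bmoNorm f := by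
  obtain ⟨C, hC⟩ := hf.2
  exact le_csInf ⟨max C 0, le_max_right C 0, fun c l hl => (hC c l hl).trans (le_max_left C 0)⟩
    fun _ hC' => hC'.2 c l hl

lemma bmoNorm_le {C : ℝ} (hC : 0 ≤ C) (h : ∀ c l, 0 < l → cubeOsc f c l ≤ C) : bmoNorm f ≤ C :=
  csInf_le ⟨0, fun _ hC' => hC'.1⟩ ⟨hC, h⟩

lemma IsBMO.sub (hf : IsBMO f) (hg : IsBMO g) : IsBMO fun x => f x - g x := by
  obtain ⟨Cf, hCf⟩ := hf.2
  obtain ⟨Cg, hCg⟩ := hg.2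
  exact ⟨hf.1.sub hg.1, Cf + Cg, fun c l hl => (cubeOsc_sub_le hl (hf.1.integrableOn_cube c l)
    (hg.1.integrableOn_cube c l)).trans (add_le_add (hCf c l hl) (hCg c l hl))⟩

lemma UniformContinuous.exists_cubeOsc_le (hf : UniformContinuous f) {ε : ℝ} (hε : 0 < ε) :
    ∃ δ > 0, ∀ c l, 0 < l → l ≤ δ → cubeOsc f c l ≤ ε := by
  obtain ⟨η, hη, hfη⟩ := Metric.uniformContinuous_iff.1 hf ε hε
  refine ⟨η / (√n + 1), by positivity, fun c l hl hlη => cubeOsc_le_of_forall hl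
    (hf.continuous.locallyIntegrable.integrableOn_cube c l) fun x hx y hy => ?_⟩
  have hlη' : l * (√n + 1) ≤ η := (le_div_iff₀ (by positivity)).1 hlη
  have hxy : dist x y < η := by nlinarith [dist_le_of_mem_cube hl.le hx hy]
  exact (hfη hxy).le

end BMO

section MovingAverage

noncomputable def movingAvg (δ : ℝ) (f : EuclideanSpace ℝ (Fin n) → ℝ) :
    EuclideanSpace ℝ (Fin n) → ℝ :=
  fun x => cubeAvg f x δ

variable {f g : EuclideanSpace ℝ (Fin n) → ℝ} {δ M : ℝ}

lemma continuous_movingAvg (hf : LocallyIntegrable f) (δ : ℝ) : Continuous (movingAvg δ f) :=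
  (continuous_setIntegral_cube hf δ).div_const _

lemma abs_cubeAvg_sub_cubeAvg_le_measureReal_symmDiff {a b : EuclideanSpace ℝ (Fin n)}
    (hδ : 0 < δ) (hg : LocallyIntegrable g) {m : ℝ}
    (hM : ∀ y ∈ cube a δ ∪ cube b δ, |g y - m| ≤ M) :
    |cubeAvg g a δ - cubeAvg g b δ| ≤ M * volume.real (cube a δ ∆ cube b δ) / δ ^ n := by
  have hga := hg.integrableOn_cube a δ
  have hgb := hg.integrableOn_cube b δ
  have hdiff : cubeAvg g a δ - cubeAvg g b δ =
      ((∫ y in cube a δ, (g y - m)) - ∫ y in cube b δ, (g y - m)) / δ ^ n := by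
    rw [sub_div, ← cubeAvg, ← cubeAvg, cubeAvg_sub hga (integrableOn_cube_const a δ m),
      cubeAvg_sub hgb (integrableOn_cube_const b δ m), cubeAvg_const hδ, cubeAvg_const hδ,
      sub_sub_sub_cancel_right]
  have hfin : volume (cube a δ ∆ cube b δ) < ⊤ :=
    (measure_mono symmDiff_subset_union).trans_lt ((measure_union_le _ _).trans_lt
      (ENNReal.add_lt_top.2 ⟨(volume_cube_ne_top a δ).lt_top, (volume_cube_ne_top b δ).lt_top⟩))
  rw [hdiff, abs_div, abs_of_pos (by positivity : (0 : ℝ) < δ ^ n)]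
  gcongr
  calc _ ≤ ∫ y in cube a δ ∆ cube b δ, |g y - m| :=
        abs_setIntegral_sub_setIntegral_le (measurableSet_cube a δ) (measurableSet_cube b δ)
          (hga.sub (integrableOn_cube_const a δ m)) (hgb.sub (integrableOn_cube_const b δ m))
    _ ≤ M * volume.real (cube a δ ∆ cube b δ) :=
        (Real.le_norm_self _).trans <| norm_setIntegral_le_of_norm_le_const hfin fun y hy => by
          rw [Real.norm_eq_abs, abs_abs]
          exact hM y (symmDiff_subset_union hy)

lemma uniformContinuous_movingAvg (hg : LocallyIntegrable g) (hδ : 0 < δ)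
    (hM : ∀ x y, (∀ i, |y i - x i| ≤ 2 * δ) → |g y - g x| ≤ M) :
    UniformContinuous (movingAvg δ g) := by
  have hM0 : 0 ≤ M := (abs_nonneg _).trans (hM 0 0 fun _ => by
    simp only [sub_self, abs_zero]; positivity)
  have hvol : Tendsto (fun v : EuclideanSpace ℝ (Fin n) => volume.real (cube v δ ∆ cube 0 δ))
      (𝓝 0) (𝓝 0) :=
    (ENNReal.tendsto_toReal ENNReal.zero_ne_top).comp (tendsto_volume_cube_symmDiff_cube 0 δ)
  rw [Metric.uniformContinuous_iff]
  intro ε hε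
  obtain ⟨η, hη, hηvol⟩ := Metric.tendsto_nhds_nhds.1 hvol (ε * δ ^ n / (M + 1)) (by positivity)
  refine ⟨min η δ, lt_min hη hδ, fun {a b} hab => ?_⟩
  have hv : volume.real (cube a δ ∆ cube b δ) < ε * δ ^ n / (M + 1) := by
    have := hηvol (x := a - b) (by
      rw [dist_zero_right, ← dist_eq_norm]; exact hab.trans_le (min_le_left η δ))
    rwa [Real.dist_eq, sub_zero, abs_of_nonneg measureReal_nonneg, measureReal_def,
      ← volume_cube_symmDiff_cube, ← measureReal_def] at this
  have hnear : ∀ y ∈ cube a δ ∪ cube b δ, |g y - g a| ≤ M := by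
    refine fun y hy => hM a y fun i => abs_le.2 ?_
    have hba := abs_lt.1 ((PiLp.dist_apply_le b a i).trans_lt
      ((dist_comm b a).trans_lt (hab.trans_le (min_le_right η δ))))
    rcases hy with hy | hy <;> obtain ⟨hy₁, hy₂⟩ := hy i <;> constructor <;>
      linarith [hba.1, hba.2]
  rw [Real.dist_eq]
  calc |movingAvg δ g a - movingAvg δ g b|
      ≤ M * volume.real (cube a δ ∆ cube b δ) / δ ^ n :=
        abs_cubeAvg_sub_cubeAvg_le_measureReal_symmDiff hδ hg hnear
    _ ≤ M * (ε * δ ^ n / (M + 1)) / δ ^ n := by gcongr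
    _ < ε := by
        rw [mul_div_assoc', div_div, div_lt_iff₀ (by positivity)]
        nlinarith [pow_pos hδ n]

lemma abs_movingAvg_sub_movingAvg_le_of_cubeOsc_le (hf : LocallyIntegrable f) (hδ : 0 < δ)
    {L ε : ℝ} (hL : 0 < L) (hosc : ∀ c, cubeOsc f c L ≤ ε) {x y : EuclideanSpace ℝ (Fin n)}
    (hxy : ∀ i, |x i - y i| ≤ L - δ) :
    |movingAvg δ f x - movingAvg δ f y| ≤ 2 * ((L / δ) ^ n * ε) := by
  set b : EuclideanSpace ℝ (Fin n) := WithLp.toLp 2 fun i => min (x i) (y i)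
  have hb : ∀ z, (∀ i, min (x i) (y i) ≤ z i ∧ z i - min (x i) (y i) ≤ L - δ) →
      |movingAvg δ f z - cubeAvg f b L| ≤ (L / δ) ^ n * ε := fun z hz =>
    (abs_cubeAvg_sub_cubeAvg_le_of_subset hδ hL
      (cube_subset_cube fun i => ⟨(hz i).1, by linarith [(hz i).2]⟩)
      (hf.integrableOn_cube b L)).trans (by gcongr; exact hosc b)
  have hx := hb x fun i => ⟨min_le_left _ _, by
    rcases min_cases (x i) (y i) with ⟨h, -⟩ | ⟨h, -⟩ <;> rw [h] <;> linarith [abs_le.1 (hxy i)]⟩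
  have hy := hb y fun i => ⟨min_le_right _ _, by
    rcases min_cases (x i) (y i) with ⟨h, -⟩ | ⟨h, -⟩ <;> rw [h] <;> linarith [abs_le.1 (hxy i)]⟩
  calc |movingAvg δ f x - movingAvg δ f y|
      ≤ |movingAvg δ f x - cubeAvg f b L| + |cubeAvg f b L - movingAvg δ f y| := abs_sub_le _ _ _
    _ ≤ 2 * ((L / δ) ^ n * ε) := by rw [abs_sub_comm (cubeAvg f b L)]; linarith

end MovingAverage

section Approximation

variable {φ : EuclideanSpace ℝ (Fin n) → ℝ} {δ ε : ℝ}

lemma abs_movingAvg_sub_movingAvg_le (hφ : LocallyIntegrable φ) (hδ : 0 < δ)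
    (hosc : ∀ c l, 0 < l → l ≤ 3 * δ → cubeOsc φ c l ≤ ε) {x y : EuclideanSpace ℝ (Fin n)}
    (hxy : ∀ i, |x i - y i| ≤ 2 * δ) :
    |movingAvg δ φ x - movingAvg δ φ y| ≤ 2 * (3 ^ n * ε) := by
  have h := abs_movingAvg_sub_movingAvg_le_of_cubeOsc_le hφ hδ (by positivity)
    (fun c => hosc c (3 * δ) (by positivity) le_rfl) (x := x) (y := y)
    fun i => by linarith [hxy i]
  rwa [mul_div_cancel_right₀ 3 hδ.ne'] at h

lemma abs_movingAvg_movingAvg_sub_movingAvg_le (hφ : LocallyIntegrable φ) (hδ : 0 < δ)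
    (hosc : ∀ c l, 0 < l → l ≤ 3 * δ → cubeOsc φ c l ≤ ε) (x : EuclideanSpace ℝ (Fin n)) :
    |movingAvg δ (movingAvg δ φ) x - movingAvg δ φ x| ≤ 2 * (3 ^ n * ε) :=
  abs_cubeAvg_sub_le_of_forall hδ
    ((continuous_movingAvg hφ δ).locallyIntegrable.integrableOn_cube x δ)
    fun y hy => abs_movingAvg_sub_movingAvg_le hφ hδ hosc fun i => by
      obtain ⟨h₁, h₂⟩ := hy i
      exact abs_le.2 ⟨by linarith, by linarith⟩

lemma cubeOsc_movingAvg_movingAvg_le (hφ : LocallyIntegrable φ) (hδ : 0 < δ)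
    (hosc : ∀ c l, 0 < l → l ≤ 3 * δ → cubeOsc φ c l ≤ ε) {c : EuclideanSpace ℝ (Fin n)}
    {l : ℝ} (hl : 0 < l) (hlδ : l ≤ δ) :
    cubeOsc (movingAvg δ (movingAvg δ φ)) c l ≤ 6 * (3 ^ n * ε) := by
  set g := movingAvg δ φ
  set ψ := movingAvg δ g
  have hψ : Continuous ψ := continuous_movingAvg (continuous_movingAvg hφ δ).locallyIntegrable δ
  refine cubeOsc_le_of_forall hl (hψ.locallyIntegrable.integrableOn_cube c l)
    fun x hx y hy => ?_
  have hψx := abs_movingAvg_movingAvg_sub_movingAvg_le hφ hδ hosc x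
  have hψy := abs_movingAvg_movingAvg_sub_movingAvg_le hφ hδ hosc y
  have hg := abs_movingAvg_sub_movingAvg_le hφ hδ hosc (x := x) (y := y) fun i => by
    linarith [abs_sub_lt_of_mem_cube hx hy i]
  calc |ψ x - ψ y| = |(ψ x - g x) + (g x - g y) + (g y - ψ y)| := by ring_nf
    _ ≤ |ψ x - g x| + |g x - g y| + |g y - ψ y| := abs_add_three _ _ _
    _ ≤ 6 * (3 ^ n * ε) := by rw [abs_sub_comm (g y)]; linarith

lemma setIntegral_cube_two_mul_abs_sub_movingAvg_le (hφ : LocallyIntegrable φ) (hδ : 0 < δ)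
    (hosc : ∀ c l, 0 < l → l ≤ 3 * δ → cubeOsc φ c l ≤ ε) (b : EuclideanSpace ℝ (Fin n)) :
    ∫ y in cube b (2 * δ), |φ y - movingAvg δ φ y| ≤ (3 ^ n + 6 ^ n) * δ ^ n * ε := by
  set M := cubeAvg φ b (3 * δ)
  have h3δ : 0 < 3 * δ := by positivity
  have hφ3 := hφ.integrableOn_cube b (3 * δ)
  have hpt : ∀ y ∈ cube b (2 * δ), |φ y - movingAvg δ φ y| ≤ |φ y - M| + 3 ^ n * ε := by
    intro y hy
    have hsub : cube y δ ⊆ cube b (3 * δ) :=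
      cube_subset_cube fun i => ⟨(hy i).1.le, by linarith [(hy i).2]⟩
    have hgM := abs_cubeAvg_sub_cubeAvg_le_of_subset hδ h3δ hsub hφ3
    rw [mul_div_cancel_right₀ 3 hδ.ne'] at hgM
    calc |φ y - movingAvg δ φ y| ≤ |φ y - M| + |M - movingAvg δ φ y| := abs_sub_le _ _ _
      _ ≤ |φ y - M| + 3 ^ n * cubeOsc φ b (3 * δ) := by
          rw [abs_sub_comm M]
          exact add_le_add_right hgM _
      _ ≤ |φ y - M| + 3 ^ n * ε := by gcongr; exact hosc b _ h3δ le_rfl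
  have hφM := integrableOn_abs_sub_const (hφ.integrableOn_cube b (2 * δ)) M
  have hφg := (hφ.sub (continuous_movingAvg hφ δ).locallyIntegrable).integrableOn_cube b (2 * δ)
  calc ∫ y in cube b (2 * δ), |φ y - movingAvg δ φ y|
      ≤ ∫ y in cube b (2 * δ), (|φ y - M| + 3 ^ n * ε) :=
        setIntegral_mono_on hφg.abs (hφM.add (integrableOn_cube_const _ _ _))
          (measurableSet_cube _ _) hpt
    _ = (∫ y in cube b (2 * δ), |φ y - M|) + (2 * δ) ^ n * (3 ^ n * ε) := by
        rw [integral_add hφM (integrableOn_cube_const _ _ _),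
          setIntegral_cube_const (by positivity)]
    _ ≤ (∫ y in cube b (3 * δ), |φ y - M|) + (2 * δ) ^ n * (3 ^ n * ε) := by
        gcongr
        exacts [.of_forall fun _ => abs_nonneg _, integrableOn_abs_sub_const hφ3 M,
          cube_subset_cube fun i => ⟨le_rfl, by linarith⟩]
    _ ≤ (3 * δ) ^ n * ε + (2 * δ) ^ n * (3 ^ n * ε) := by
        rw [setIntegral_abs_sub_cubeAvg h3δ]
        gcongr
        exact hosc b _ h3δ le_rfl
    _ = (3 ^ n + 6 ^ n) * δ ^ n * ε := by
        rw [mul_pow, mul_pow, show (6 : ℝ) = 2 * 3 by norm_num, mul_pow]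
        ring

lemma setIntegral_abs_sub_movingAvg_le (hφ : LocallyIntegrable φ) (hδ : 0 < δ)
    (hosc : ∀ c l, 0 < l → l ≤ 3 * δ → cubeOsc φ c l ≤ ε) (c : EuclideanSpace ℝ (Fin n))
    {l : ℝ} (hl : δ ≤ l) :
    ∫ y in cube c l, |φ y - movingAvg δ φ y| ≤ (6 ^ n + 12 ^ n) * l ^ n * ε := by
  have hε : 0 ≤ ε := (cubeOsc_nonneg hδ).trans (hosc c δ hδ (by linarith))
  have hφg := hφ.sub (continuous_movingAvg hφ δ).locallyIntegrable
  have hK : (⌈l / δ⌉₊ : ℝ) ≤ 2 * l / δ := by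
    have h₁ := Nat.ceil_lt_add_one (div_nonneg (hδ.le.trans hl) hδ.le)
    have h₂ := (one_le_div hδ).2 hl
    rw [mul_div_assoc]
    linarith
  calc ∫ y in cube c l, |φ y - movingAvg δ φ y|
      ≤ ∑ k : Fin n → Fin ⌈l / δ⌉₊, ∫ y in cube (WithLp.toLp 2 fun i => c i + δ * ((k i : ℕ) - 1))
          (2 * δ), |φ y - movingAvg δ φ y| :=
        setIntegral_le_sum_of_subset_iUnion (fun _ => abs_nonneg _)
          (fun _ => (hφg.integrableOn_cube _ _).abs) (cube_subset_iUnion_cube hδ c l)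
    _ ≤ ∑ _k : Fin n → Fin ⌈l / δ⌉₊, (3 ^ n + 6 ^ n) * δ ^ n * ε :=
        Finset.sum_le_sum fun _ _ => setIntegral_cube_two_mul_abs_sub_movingAvg_le hφ hδ hosc _
    _ = (⌈l / δ⌉₊ : ℝ) ^ n * ((3 ^ n + 6 ^ n) * δ ^ n * ε) := by simp
    _ ≤ (2 * l / δ) ^ n * ((3 ^ n + 6 ^ n) * δ ^ n * ε) := by gcongr
    _ = (2 ^ n * 3 ^ n + 2 ^ n * 6 ^ n) * l ^ n * ε := by
        rw [div_pow, mul_pow]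
        field_simp
    _ = (6 ^ n + 12 ^ n) * l ^ n * ε := by
        rw [← mul_pow, ← mul_pow]
        norm_num

lemma cubeOsc_sub_movingAvg_movingAvg_le_of_le (hφ : LocallyIntegrable φ) (hδ : 0 < δ)
    (hosc : ∀ c l, 0 < l → l ≤ 3 * δ → cubeOsc φ c l ≤ ε) (c : EuclideanSpace ℝ (Fin n))
    {l : ℝ} (hl : δ ≤ l) :
    cubeOsc (fun x => φ x - movingAvg δ (movingAvg δ φ) x) c l ≤
      2 * ((6 ^ n + 12 ^ n) * ε + 2 * (3 ^ n * ε)) := by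
  have hl₀ : 0 < l := hδ.trans_le hl
  have hg : LocallyIntegrable (movingAvg δ φ) := (continuous_movingAvg hφ δ).locallyIntegrable
  have hφg : IntegrableOn (fun x => |φ x - movingAvg δ φ x|) (cube c l) :=
    ((hφ.sub hg).integrableOn_cube c l).abs
  have hφψ : IntegrableOn (fun x => φ x - movingAvg δ (movingAvg δ φ) x) (cube c l) :=
    (hφ.sub (continuous_movingAvg hg δ).locallyIntegrable).integrableOn_cube c l
  have hpt : ∀ x ∈ cube c l, |φ x - movingAvg δ (movingAvg δ φ) x| ≤
      |φ x - movingAvg δ φ x| + 2 * (3 ^ n * ε) := fun x _ => by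
    have := abs_movingAvg_movingAvg_sub_movingAvg_le hφ hδ hosc x
    rw [abs_sub_comm] at this
    exact (abs_sub_le _ _ _).trans (by gcongr)
  calc cubeOsc (fun x => φ x - movingAvg δ (movingAvg δ φ) x) c l
      ≤ 2 * cubeAvg (fun x => |φ x - movingAvg δ (movingAvg δ φ) x|) c l := by
        simpa only [sub_zero] using cubeOsc_le_two_mul hl₀ hφψ 0
    _ ≤ 2 * cubeAvg (fun x => |φ x - movingAvg δ φ x| + 2 * (3 ^ n * ε)) c l := by
        gcongr
        exact cubeAvg_le_cubeAvg hl₀ hφψ.abs (hφg.add (integrableOn_cube_const c l _)) hpt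
    _ = 2 * ((∫ x in cube c l, |φ x - movingAvg δ φ x|) / l ^ n + 2 * (3 ^ n * ε)) := by
        rw [cubeAvg_add hφg (integrableOn_cube_const c l _), cubeAvg_const hl₀, cubeAvg]
    _ ≤ 2 * ((6 ^ n + 12 ^ n) * ε + 2 * (3 ^ n * ε)) := by
        gcongr
        rw [div_le_iff₀ (by positivity)]
        linarith [setIntegral_abs_sub_movingAvg_le hφ hδ hosc c hl]

lemma cubeOsc_sub_movingAvg_movingAvg_le (hφ : LocallyIntegrable φ) (hδ : 0 < δ)
    (hosc : ∀ c l, 0 < l → l ≤ 3 * δ → cubeOsc φ c l ≤ ε) (c : EuclideanSpace ℝ (Fin n))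
    {l : ℝ} (hl : 0 < l) :
    cubeOsc (fun x => φ x - movingAvg δ (movingAvg δ φ) x) c l ≤ 8 * 12 ^ n * ε := by
  have hε : 0 ≤ ε := (cubeOsc_nonneg hδ).trans (hosc c δ hδ (by linarith))
  have h3 : (3 : ℝ) ^ n * ε ≤ 12 ^ n * ε := by gcongr; norm_num
  have h6 : (6 : ℝ) ^ n * ε ≤ 12 ^ n * ε := by gcongr; norm_num
  have h1 : ε ≤ 12 ^ n * ε := le_mul_of_one_le_left hε (one_le_pow₀ (by norm_num))
  rcases le_or_gt l δ with hlδ | hδl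
  · have hψ := continuous_movingAvg (continuous_movingAvg hφ δ).locallyIntegrable δ
    calc cubeOsc (fun x => φ x - movingAvg δ (movingAvg δ φ) x) c l
        ≤ cubeOsc φ c l + cubeOsc (movingAvg δ (movingAvg δ φ)) c l :=
          cubeOsc_sub_le hl (hφ.integrableOn_cube c l) (hψ.locallyIntegrable.integrableOn_cube c l)
      _ ≤ ε + 6 * (3 ^ n * ε) := add_le_add (hosc c l hl (by linarith))
          (cubeOsc_movingAvg_movingAvg_le hφ hδ hosc hl hlδ)
      _ ≤ 8 * 12 ^ n * ε := by linarith
  · linarith [cubeOsc_sub_movingAvg_movingAvg_le_of_le hφ hδ hosc c hδl.le]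

end Approximation

section Main

variable {φ : EuclideanSpace ℝ (Fin n) → ℝ}

lemma IsVMO.exists_uniformContinuous_bmoNorm_sub_le (hφ : IsVMO φ) {ε : ℝ} (hε : 0 < ε) :
    ∃ ψ : EuclideanSpace ℝ (Fin n) → ℝ,
      UniformContinuous ψ ∧ IsBMO ψ ∧ bmoNorm (fun x => φ x - ψ x) ≤ ε := by
  obtain ⟨δ₀, hδ₀, hosc⟩ := hφ.2 (ε / (8 * 12 ^ n)) (by positivity)
  set δ := δ₀ / 3
  have hδ : 0 < δ := by positivity
  have hosc3 : ∀ c l, 0 < l → l ≤ 3 * δ → cubeOsc φ c l ≤ ε / (8 * 12 ^ n) :=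
    fun c l hl hlδ => hosc c l hl (hlδ.trans_eq (by ring))
  have hg : LocallyIntegrable (movingAvg δ φ) := (continuous_movingAvg hφ.1.1 δ).locallyIntegrable
  have hdiff : ∀ c l, 0 < l →
      cubeOsc (fun x => φ x - movingAvg δ (movingAvg δ φ) x) c l ≤ ε := fun c l hl =>
    (cubeOsc_sub_movingAvg_movingAvg_le hφ.1.1 hδ hosc3 c hl).trans_eq (by field_simp)
  have hφψ : IsBMO fun x => φ x - movingAvg δ (movingAvg δ φ) x :=
    ⟨hφ.1.1.sub (continuous_movingAvg hg δ).locallyIntegrable, ε, hdiff⟩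
  refine ⟨movingAvg δ (movingAvg δ φ), uniformContinuous_movingAvg hg hδ fun x y hxy =>
    abs_movingAvg_sub_movingAvg_le hφ.1.1 hδ hosc3 hxy, ?_, bmoNorm_le hε.le hdiff⟩
  simpa only [sub_sub_cancel] using hφ.1.sub hφψ

lemma IsBMO.isVMO_of_forall_uniformContinuous_bmoNorm_sub_le (hφ : IsBMO φ)
    (h : ∀ ε > (0 : ℝ), ∃ ψ : EuclideanSpace ℝ (Fin n) → ℝ,
      UniformContinuous ψ ∧ IsBMO ψ ∧ bmoNorm (fun x => φ x - ψ x) ≤ ε) :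
    IsVMO φ := by
  refine ⟨hφ, fun ε hε => ?_⟩
  obtain ⟨ψ, hψuc, hψ, hφψ⟩ := h (ε / 2) (half_pos hε)
  obtain ⟨δ, hδ, hoscψ⟩ := hψuc.exists_cubeOsc_le (half_pos hε)
  refine ⟨δ, hδ, fun c l hl hlδ => ?_⟩
  calc cubeOsc φ c l = cubeOsc (fun x => (φ x - ψ x) + ψ x) c l := by simp only [sub_add_cancel]
    _ ≤ cubeOsc (fun x => φ x - ψ x) c l + cubeOsc ψ c l :=
      cubeOsc_add_le hl ((hφ.1.sub hψ.1).integrableOn_cube c l) (hψ.1.integrableOn_cube c l)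
    _ ≤ ε / 2 + ε / 2 :=
      add_le_add ((cubeOsc_le_bmoNorm (hφ.sub hψ) hl).trans hφψ) (hoscψ c l hl hlδ)
    _ = ε := add_halves ε

end Main

/-- For `φ ∈ BMO(ℝⁿ)`: `φ ∈ VMO(ℝⁿ)` iff `φ` lies in the `BMO`-closure of
`UC(ℝⁿ) ∩ BMO(ℝⁿ)`. -/
theorem vmo_iff_closure_uc {n : ℕ} (φ : EuclideanSpace ℝ (Fin n) → ℝ) (hφ : IsBMO φ) :
    IsVMO φ ↔
      ∀ ε > (0 : ℝ), ∃ ψ : EuclideanSpace ℝ (Fin n) → ℝ,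
        UniformContinuous ψ ∧ IsBMO ψ ∧ bmoNorm (fun x => φ x - ψ x) ≤ ε :=
  ⟨fun hvmo _ hε => hvmo.exists_uniformContinuous_bmoNorm_sub_le hε,
    hφ.isVMO_of_forall_uniformContinuous_bmoNorm_sub_le⟩
end

section
/- Let F ∈ C¹(Δ) be continuously differentiable on the unit disk such that |∇F| dxdy is a vanishing Carleson measure on Δ and lim_{r→1} F(re^{iθ}) = f(e^{iθ}) exists for almost every θ. Then f ∈ VMO(S). -/
/-!
Fix an arc `I = [a, a + h]` whose Carleson box has `|∇F| dxdy`-mass at most `B h`. The polar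
rectangle `(1 - h/4π, 1) × I` lies in that box and `r ≥ 1/2` on it, so the integral of `|∇F|` over
it in the coordinates `(r, θ)` is at most `2 B h`. By Fubini some radius `ρ` carries an angular
integral of `|∇F|` over `I` of at most `8πB`. Integrating `∇F` along that circle and then along the
radius through `e^{iθ}` gives `|f(θ) - F(ρ e^{ia})| ≤ ∫_ρ^1 |∇F(r e^{iθ})| dr + 8πB` for a.e.
`θ ∈ I`; integrating over `I` bounds the mean oscillation of `f` on `I` by `(4 + 16π) B`. The
Carleson and vanishing Carleson conditions turn this into `f ∈ BMO` and `f ∈ VMO`.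
-/

open MeasureTheory Real Set Filter

/-- Balayage (sweep) of a measure `μ` on the disk. -/
noncomputable def balayage (μ : Measure ℂ) (θ : ℝ) : ℝ := ∫ z, poissonDisk z θ ∂μ

/-- Carleson square over the arc `[a, a+h]`. -/
def carlesonBox (a h : ℝ) : Set ℂ :=
  (fun p : ℝ × ℝ => (p.1 : ℂ) * Complex.exp ((p.2 : ℂ) * Complex.I)) ''
    (Set.Ioo (1 - h / (2 * π)) 1 ×ˢ Set.Icc a (a + h))

/-- `μ` is a Carleson measure with Carleson constant `A`. -/
def IsCarleson (μ : Measure ℂ) (A : ℝ) : Prop :=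
  ∀ a h, 0 < h → h ≤ 2 * π → μ (carlesonBox a h) ≤ ENNReal.ofReal (A * h)


/-- `μ` is a vanishing Carleson measure. -/
def IsVanishingCarleson (μ : Measure ℂ) : Prop :=
  (∃ A, IsCarleson μ A) ∧
    ∀ ε > (0 : ℝ), ∃ δ > (0 : ℝ), ∀ a h, 0 < h → h ≤ δ →
      μ (carlesonBox a h) ≤ ENNReal.ofReal (ε * h)

/-- The measure `|∇F| dxdy` on the unit disk. -/
noncomputable def gradMeasure (F : ℂ → ℝ) : Measure ℂ :=
  (volume.restrict (Metric.ball (0 : ℂ) 1)).withDensity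
    fun z => ENNReal.ofReal ‖fderiv ℝ F z‖

open scoped ENNReal Topology

noncomputable def polar (p : ℝ × ℝ) : ℂ := (p.1 : ℂ) * Complex.exp ((p.2 : ℂ) * Complex.I)

theorem norm_polar (p : ℝ × ℝ) : ‖polar p‖ = |p.1| := by
  simp [polar, Complex.norm_exp_ofReal_mul_I]

theorem polar_mem_ball {p : ℝ × ℝ} (hp : |p.1| < 1) : polar p ∈ Metric.ball (0 : ℂ) 1 := by
  rwa [mem_ball_zero_iff, norm_polar]

theorem continuous_polar : Continuous polar := by
  unfold polar; fun_prop

theorem polar_eq_polarCoord_symm (p : ℝ × ℝ) : polar p = Complex.polarCoord.symm p := by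
  simp [polar, Complex.exp_mul_I, mul_add]

theorem injOn_polar {a b : ℝ} (hab : b - a ≤ 2 * π) : InjOn polar (Ioi 0 ×ˢ Ioc a b) := by
  rintro ⟨r₁, θ₁⟩ ⟨hr₁, hθ₁⟩ ⟨r₂, θ₂⟩ ⟨hr₂, hθ₂⟩ heq
  have hr : r₁ = r₂ := by
    simpa [norm_polar, abs_of_pos (mem_Ioi.1 hr₁), abs_of_pos (mem_Ioi.1 hr₂)] using
      congrArg norm heq
  subst hr
  have hr₁0 : (r₁ : ℂ) ≠ 0 := Complex.ofReal_ne_zero.2 (ne_of_gt hr₁)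
  have hθ : Circle.exp θ₁ = Circle.exp θ₂ := by
    ext1
    simpa [Circle.coe_exp, polar, hr₁0] using heq
  rw [show θ₁ = θ₂ from Circle.exp_injOn_Ioc hab hθ₁ hθ₂ hθ]

theorem lintegral_image_polar {s : Set (ℝ × ℝ)} (hs : MeasurableSet s) (hinj : InjOn polar s)
    (g : ℂ → ℝ≥0∞) :
    ∫⁻ z in polar '' s, g z = ∫⁻ p in s, ENNReal.ofReal |p.1| * g (polar p) := by
  have hpolar : polar = Complex.measurableEquivRealProd.symm ∘ polarCoord.symm :=
    funext fun p => polar_eq_polarCoord_symm p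
  rw [hpolar, image_comp, ← (Complex.volume_preserving_equiv_real_prod.symm).setLIntegral_comp_emb
    Complex.measurableEquivRealProd.symm.measurableEmbedding,
    lintegral_image_eq_lintegral_abs_det_fderiv_mul volume hs
      (fun p _ => (hasFDerivAt_polarCoord_symm p).hasFDerivWithinAt) (hpolar ▸ hinj).of_comp]
  simp_rw [det_fderivPolarCoordSymm]
  rfl

theorem setLIntegral_le_gradMeasure (F : ℂ → ℝ) {S T : Set ℂ} (hST : S ⊆ T)
    (hS : S ⊆ Metric.ball 0 1) : ∫⁻ z in S, ‖fderiv ℝ F z‖ₑ ≤ gradMeasure F T := by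
  rw [gradMeasure, withDensity_apply', Measure.restrict_restrict' measurableSet_ball]
  simp_rw [ofReal_norm]
  exact lintegral_mono_set (subset_inter hST hS)

theorem lintegral_polarRect_le_two_mul_gradMeasure (F : ℂ → ℝ) {a h ρ : ℝ} (hρ : 1 / 2 ≤ ρ)
    (hρh : 1 - h / (2 * π) ≤ ρ) (hh : h ≤ 2 * π) :
    ∫⁻ p in Ioo ρ 1 ×ˢ Ioc a (a + h), ‖fderiv ℝ F (polar p)‖ₑ
      ≤ 2 * gradMeasure F (carlesonBox a h) := by
  set R := Ioo ρ 1 ×ˢ Ioc a (a + h)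
  have hR : MeasurableSet R := measurableSet_Ioo.prod measurableSet_Ioc
  have hRpos : R ⊆ Ioi 0 ×ˢ Ioc a (a + h) :=
    prod_mono (fun r hr => (one_half_pos.trans_le hρ).trans hr.1) subset_rfl
  have hjac : ∀ p ∈ R, (1 : ℝ≥0∞) ≤ 2 * ENNReal.ofReal |p.1| := fun p hp => by
    rw [← ENNReal.ofReal_ofNat 2, ← ENNReal.ofReal_mul zero_le_two, ← ENNReal.ofReal_one]
    exact ENNReal.ofReal_le_ofReal (by linarith [le_abs_self p.1, hp.1.1])
  have hbox : polar '' R ⊆ carlesonBox a h :=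
    image_mono (prod_mono (Ioo_subset_Ioo_left hρh) Ioc_subset_Icc_self)
  have hball : polar '' R ⊆ Metric.ball 0 1 := by
    rintro _ ⟨p, hp, rfl⟩
    exact polar_mem_ball (abs_lt.2 ⟨by linarith [hp.1.1], hp.1.2⟩)
  calc ∫⁻ p in R, ‖fderiv ℝ F (polar p)‖ₑ
      ≤ ∫⁻ p in R, 2 * (ENNReal.ofReal |p.1| * ‖fderiv ℝ F (polar p)‖ₑ) :=
        setLIntegral_mono' hR fun p hp => by
          rw [← mul_assoc]; exact le_mul_of_one_le_left' (hjac p hp)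
    _ = 2 * ∫⁻ z in polar '' R, ‖fderiv ℝ F z‖ₑ := by
        rw [lintegral_image_polar hR ((injOn_polar (by linarith)).mono hRpos),
          lintegral_const_mul' _ _ ENNReal.ofNat_ne_top]
    _ ≤ 2 * gradMeasure F (carlesonBox a h) := by
        gcongr; exact setLIntegral_le_gradMeasure F hbox hball

section PathIntegral

variable {E G : Type*} [NormedAddCommGroup E] [NormedSpace ℝ E]
  [NormedAddCommGroup G] [NormedSpace ℝ G] [CompleteSpace G]

theorem enorm_sub_le_lintegral_enorm_fderiv_comp {F : E → G} {U : Set E} (hU : IsOpen U)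
    (hF : ContDiffOn ℝ 1 F U) {γ γ' : ℝ → E} {x y : ℝ} (hxy : x ≤ y)
    (hγ : ∀ t ∈ Icc x y, HasDerivAt γ (γ' t) t) (hγ' : ContinuousOn γ' (Icc x y))
    (hγU : MapsTo γ (Icc x y) U) :
    ‖F (γ y) - F (γ x)‖ₑ ≤ ∫⁻ t in Ioc x y, ‖fderiv ℝ F (γ t)‖ₑ * ‖γ' t‖ₑ := by
  have hγc : ContinuousOn γ (Icc x y) := fun t ht => (hγ t ht).continuousAt.continuousWithinAt
  have hDF : ContinuousOn (fun t => fderiv ℝ F (γ t)) (Icc x y) :=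
    (hF.continuousOn_fderiv_of_isOpen hU le_rfl).comp hγc hγU
  have hderiv : ∀ t ∈ uIcc x y, HasDerivAt (fun t => F (γ t)) (fderiv ℝ F (γ t) (γ' t)) t := by
    intro t ht
    rw [uIcc_of_le hxy] at ht
    exact ((hF.differentiableOn one_ne_zero).differentiableAt
      (hU.mem_nhds (hγU ht))).hasFDerivAt.comp_hasDerivAt t (hγ t ht)
  rw [← intervalIntegral.integral_eq_sub_of_hasDerivAt hderiv
      ((hDF.clm_apply hγ').intervalIntegrable_of_Icc hxy), intervalIntegral.integral_of_le hxy]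
  exact (enorm_integral_le_lintegral_enorm _).trans
    (lintegral_mono fun t => (fderiv ℝ F (γ t)).le_opENorm (γ' t))

variable {F : ℂ → G}

theorem hasDerivAt_polar_radial (θ r : ℝ) :
    HasDerivAt (fun r : ℝ => polar (r, θ)) (Complex.exp ((θ : ℂ) * Complex.I)) r := by
  simpa [polar] using (Complex.ofRealCLM.hasDerivAt (x := r)).mul_const
    (Complex.exp ((θ : ℂ) * Complex.I))

theorem hasDerivAt_polar_angular (r θ : ℝ) :
    HasDerivAt (fun θ : ℝ => polar (r, θ)) (polar (r, θ) * Complex.I) θ := by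
  have h : HasDerivAt (fun θ : ℝ => (θ : ℂ) * Complex.I) Complex.I θ := by
    simpa using (Complex.ofRealCLM.hasDerivAt (x := θ)).mul_const Complex.I
  simpa [polar, mul_assoc] using h.cexp.const_mul (r : ℂ)

theorem enorm_sub_le_lintegral_radial (hF : ContDiffOn ℝ 1 F (Metric.ball 0 1)) (θ : ℝ)
    {ρ r : ℝ} (hρ : 0 ≤ ρ) (hρr : ρ ≤ r) (hr : r < 1) :
    ‖F (polar (r, θ)) - F (polar (ρ, θ))‖ₑ ≤ ∫⁻ s in Ioc ρ r, ‖fderiv ℝ F (polar (s, θ))‖ₑ := by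
  simpa using enorm_sub_le_lintegral_enorm_fderiv_comp Metric.isOpen_ball hF hρr
    (fun s _ => hasDerivAt_polar_radial θ s) continuousOn_const
    (fun s hs => polar_mem_ball (abs_lt.2 ⟨by linarith [hs.1], hs.2.trans_lt hr⟩))

theorem enorm_sub_le_lintegral_angular (hF : ContDiffOn ℝ 1 F (Metric.ball 0 1)) {ρ : ℝ}
    (hρ : |ρ| < 1) {a b : ℝ} (hab : a ≤ b) :
    ‖F (polar (ρ, b)) - F (polar (ρ, a))‖ₑ ≤ ∫⁻ t in Ioc a b, ‖fderiv ℝ F (polar (ρ, t))‖ₑ := by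
  refine (enorm_sub_le_lintegral_enorm_fderiv_comp Metric.isOpen_ball hF hab
    (fun t _ => hasDerivAt_polar_angular ρ t)
    ((continuous_polar.comp (Continuous.prodMk_right ρ)).mul continuous_const).continuousOn
    (fun t _ => polar_mem_ball hρ)).trans (lintegral_mono fun t => ?_)
  refine mul_le_of_le_one_right' ?_
  rw [← ofReal_norm, norm_mul, Complex.norm_I, mul_one, norm_polar, ENNReal.ofReal_le_one]
  exact hρ.le

theorem enorm_sub_le_lintegral_of_tendsto (hF : ContDiffOn ℝ 1 F (Metric.ball 0 1))
    {θ ρ : ℝ} {y : G} (hρ : 0 ≤ ρ) (hρ1 : ρ < 1)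
    (hlim : Tendsto (fun r : ℝ => F (polar (r, θ))) (𝓝[<] 1) (𝓝 y)) :
    ‖y - F (polar (ρ, θ))‖ₑ ≤ ∫⁻ r in Ioo ρ 1, ‖fderiv ℝ F (polar (r, θ))‖ₑ := by
  refine le_of_tendsto ((continuous_enorm.tendsto _).comp (hlim.sub_const _)) ?_
  filter_upwards [Ioo_mem_nhdsLT hρ1] with r hr
  exact (enorm_sub_le_lintegral_radial hF θ hρ hr.1.le hr.2).trans
    (lintegral_mono_set (Ioc_subset_Ioo_right hr.2))

theorem enorm_sub_le_lintegral_radial_add_angular (hF : ContDiffOn ℝ 1 F (Metric.ball 0 1))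
    {θ ρ₁ ρ a b : ℝ} {y : G} (hρ₁ : 0 ≤ ρ₁) (hρ : ρ ∈ Ico ρ₁ 1) (hθ : θ ∈ Ioc a b)
    (hlim : Tendsto (fun r : ℝ => F (polar (r, θ))) (𝓝[<] 1) (𝓝 y)) :
    ‖y - F (polar (ρ, a))‖ₑ ≤ (∫⁻ r in Ioo ρ₁ 1, ‖fderiv ℝ F (polar (r, θ))‖ₑ)
      + ∫⁻ t in Ioc a b, ‖fderiv ℝ F (polar (ρ, t))‖ₑ := calc
  _ ≤ ‖y - F (polar (ρ, θ))‖ₑ + ‖F (polar (ρ, θ)) - F (polar (ρ, a))‖ₑ := by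
      rw [← sub_add_sub_cancel y (F (polar (ρ, θ)))]; exact enorm_add_le _ _
  _ ≤ (∫⁻ r in Ioo ρ 1, ‖fderiv ℝ F (polar (r, θ))‖ₑ)
        + ∫⁻ t in Ioc a θ, ‖fderiv ℝ F (polar (ρ, t))‖ₑ :=
      add_le_add (enorm_sub_le_lintegral_of_tendsto hF (hρ₁.trans hρ.1) hρ.2 hlim)
        (enorm_sub_le_lintegral_angular hF (abs_lt.2 ⟨by linarith [hρ.1], hρ.2⟩) hθ.1.le)
  _ ≤ _ := by
      gcongr
      exacts [hρ.1, hθ.2]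

end PathIntegral

theorem exists_mem_Ioo_lintegral_le_of_lintegral_prod_le {g : ℝ × ℝ → ℝ≥0∞} (hg : Measurable g)
    {a b C : ℝ} (hab : a < b) (T : Set ℝ)
    (h : ∫⁻ p in Ioo a b ×ˢ T, g p ≤ ENNReal.ofReal (C * (b - a))) :
    ∃ r ∈ Ioo a b, ∫⁻ t in T, g (r, t) ≤ ENNReal.ofReal C := by
  rw [Measure.volume_eq_prod, ← Measure.prod_restrict (μ := volume) (ν := volume),
    lintegral_prod _ hg.aemeasurable] at h
  obtain ⟨r, hr, hle⟩ := exists_notMem_null_le_laverage (μ := volume.restrict (Ioo a b))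
    (N := (Ioo a b)ᶜ) (by simp [hab])
    (hg.lintegral_prod_right' (ν := volume.restrict T)).aemeasurable
    (by rw [Measure.restrict_apply' measurableSet_Ioo, compl_inter_self, measure_empty])
  refine ⟨r, not_not.1 hr, hle.trans ?_⟩
  rw [setLAverage_eq, Real.volume_Ioo]
  refine ENNReal.div_le_of_le_mul ?_
  rwa [← ENNReal.ofReal_mul' (sub_nonneg.2 hab.le)]

theorem intervalIntegrable_and_integral_abs_sub_le {f : ℝ → ℝ} (hf : AEMeasurable f)
    {a b c M : ℝ} (hab : a ≤ b) (hM : 0 ≤ M)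
    (h : ∫⁻ θ in Ioc a b, ‖f θ - c‖ₑ ≤ ENNReal.ofReal M) :
    IntervalIntegrable f volume a b ∧ ∫ θ in a..b, |f θ - c| ≤ M := by
  have hfc : IntegrableOn (fun θ => f θ - c) (Ioc a b) :=
    ⟨(hf.sub_const c).aestronglyMeasurable.restrict, h.trans_lt ENNReal.ofReal_lt_top⟩
  refine ⟨(intervalIntegrable_iff_integrableOn_Ioc_of_le hab).2 ?_, ?_⟩
  · exact (hfc.add (integrableOn_const (C := c) measure_Ioc_lt_top.ne)).congr_fun
      (fun θ _ => sub_add_cancel (f θ) c) measurableSet_Ioc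
  · simp_rw [intervalIntegral.integral_of_le hab, ← Real.norm_eq_abs]
    rw [integral_norm_eq_lintegral_enorm hfc.aestronglyMeasurable]
    exact ENNReal.toReal_le_of_le_ofReal hM h

theorem circOsc_le_two_div_mul_integral_abs_sub {f : ℝ → ℝ} {a h : ℝ} (c : ℝ) (hh : 0 < h)
    (hf : IntervalIntegrable f volume a (a + h)) :
    circOsc f a h ≤ 2 / h * ∫ θ in a..(a + h), |f θ - c| := by
  have hah : a ≤ a + h := by linarith
  rw [circOsc, div_le_iff₀ hh]
  set A := circAvg f a h
  set J := ∫ θ in a..(a + h), |f θ - c|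
  have hfc : IntervalIntegrable (fun θ => |f θ - c|) volume a (a + h) :=
    (hf.sub intervalIntegrable_const).abs
  have hAc : h * |A - c| ≤ J := by
    have hA : A - c = (∫ θ in a..(a + h), (f θ - c)) / h := by
      rw [intervalIntegral.integral_sub hf intervalIntegrable_const,
        intervalIntegral.integral_const]
      simp only [A, circAvg]
      field_simp
      simp
    rw [hA, abs_div, abs_of_pos hh, mul_div_cancel₀ _ hh.ne']
    exact intervalIntegral.abs_integral_le_integral_abs hah
  have hosc : ∫ θ in a..(a + h), |f θ - A| ≤ J + h * |A - c| := calc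
    ∫ θ in a..(a + h), |f θ - A| ≤ ∫ θ in a..(a + h), (|f θ - c| + |A - c|) :=
      intervalIntegral.integral_mono_on hah (hf.sub intervalIntegrable_const).abs
        (hfc.add intervalIntegrable_const)
        fun θ _ => (abs_sub_le _ c _).trans_eq (by rw [abs_sub_comm c])
    _ = J + h * |A - c| := by
      rw [intervalIntegral.integral_add hfc intervalIntegrable_const,
        intervalIntegral.integral_const, smul_eq_mul, add_sub_cancel_left]
  have h2J : 2 / h * J * h = 2 * J := by field_simp
  linarith

theorem aemeasurable_of_ae_tendsto_polar {F : ℂ → ℝ} {f : ℝ → ℝ}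
    (hF : ContinuousOn F (Metric.ball 0 1))
    (hlim : ∀ᵐ θ, Tendsto (fun r : ℝ => F (polar (r, θ))) (𝓝[<] 1) (𝓝 (f θ))) :
    AEMeasurable f := by
  obtain ⟨u, -, hu01, hu⟩ := exists_seq_strictMono_tendsto' (zero_lt_one' ℝ)
  have hu' : Tendsto u atTop (𝓝[<] 1) :=
    tendsto_nhdsWithin_iff.2 ⟨hu, Eventually.of_forall fun n => (hu01 n).2⟩
  refine aemeasurable_of_tendsto_metrizable_ae atTop (f := fun n θ => F (polar (u n, θ)))
    (fun n => ?_) (hlim.mono fun θ hθ => hθ.comp hu')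
  refine (hF.comp_continuous (continuous_polar.comp (Continuous.prodMk_right (u n)))
    fun θ => polar_mem_ball ?_).measurable.aemeasurable
  exact abs_lt.2 ⟨by linarith [(hu01 n).1], (hu01 n).2⟩

theorem locallyIntegrable_of_forall_intervalIntegrable {E : Type*} [NormedAddCommGroup E]
    {f : ℝ → E} {T : ℝ} (hT : 0 < T) (hf : ∀ a, IntervalIntegrable f volume a (a + T)) :
    LocallyIntegrable f := fun x => by
  refine ⟨Ioc (x - T / 2) (x + T / 2), Ioc_mem_nhds (by linarith) (by linarith), ?_⟩
  have h := hf (x - T / 2)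
  rw [show x - T / 2 + T = x + T / 2 by ring,
    intervalIntegrable_iff_integrableOn_Ioc_of_le (by linarith)] at h
  exact h

theorem lintegral_polarRect_le_of_gradMeasure_carlesonBox_le {F : ℂ → ℝ} {a h B : ℝ}
    (hh : 0 < h) (hh2 : h ≤ 2 * π)
    (hμ : gradMeasure F (carlesonBox a h) ≤ ENNReal.ofReal (B * h)) :
    ∫⁻ p in Ioo (1 - h / (4 * π)) 1 ×ˢ Ioc a (a + h), ‖fderiv ℝ F (polar p)‖ₑ
      ≤ ENNReal.ofReal (2 * B * h) := by
  have h24 : h / (4 * π) ≤ h / (2 * π) := by gcongr; linarith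
  have h12 : h / (4 * π) ≤ 1 / 2 := by rw [div_le_iff₀ (by positivity)]; linarith
  calc _ ≤ 2 * gradMeasure F (carlesonBox a h) :=
        lintegral_polarRect_le_two_mul_gradMeasure F (by linarith) (by linarith) hh2
    _ ≤ 2 * ENNReal.ofReal (B * h) := by gcongr
    _ = ENNReal.ofReal (2 * B * h) := by
        rw [← ENNReal.ofReal_ofNat 2, ← ENNReal.ofReal_mul zero_le_two, mul_assoc]

theorem exists_lintegral_enorm_sub_le {F : ℂ → ℝ} {f : ℝ → ℝ}
    (hF : ContDiffOn ℝ 1 F (Metric.ball 0 1))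
    (hlim : ∀ᵐ θ, Tendsto (fun r : ℝ => F (polar (r, θ))) (𝓝[<] 1) (𝓝 (f θ)))
    {a h B : ℝ} (hh : 0 < h) (hh2 : h ≤ 2 * π) (hB : 0 ≤ B)
    (hμ : gradMeasure F (carlesonBox a h) ≤ ENNReal.ofReal (B * h)) :
    ∃ c, ∫⁻ θ in Ioc a (a + h), ‖f θ - c‖ₑ ≤ ENNReal.ofReal ((2 + 8 * π) * B * h) := by
  set ρ₁ := 1 - h / (4 * π)
  have hρ₁ : 0 ≤ ρ₁ ∧ ρ₁ < 1 := by
    have : h / (4 * π) ≤ 1 := by rw [div_le_one (by positivity)]; linarith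
    exact ⟨by linarith, by linarith [show 0 < h / (4 * π) by positivity]⟩
  set d : ℝ × ℝ → ℝ≥0∞ := fun p => ‖fderiv ℝ F (polar p)‖ₑ
  have hd : Measurable d := (measurable_fderiv ℝ F).enorm.comp continuous_polar.measurable
  have hJ := lintegral_polarRect_le_of_gradMeasure_carlesonBox_le hh hh2 hμ
  obtain ⟨ρ, hρ, hH⟩ := exists_mem_Ioo_lintegral_le_of_lintegral_prod_le hd hρ₁.2 _
    (C := 8 * π * B) (hJ.trans_eq (by simp only [ρ₁, sub_sub_cancel]; congr 1; field_simp; ring))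
  refine ⟨F (polar (ρ, a)), ?_⟩
  calc _ ≤ ∫⁻ θ in Ioc a (a + h), ((∫⁻ r in Ioo ρ₁ 1, d (r, θ)) + ENNReal.ofReal (8 * π * B)) := by
        refine lintegral_mono_ae ?_
        filter_upwards [ae_restrict_of_ae hlim, ae_restrict_mem measurableSet_Ioc] with θ hθ hθI
        exact (enorm_sub_le_lintegral_radial_add_angular hF hρ₁.1 (Ioo_subset_Ico_self hρ)
          hθI hθ).trans (by gcongr)
    _ = (∫⁻ p in Ioo ρ₁ 1 ×ˢ Ioc a (a + h), d p)
          + ENNReal.ofReal h * ENNReal.ofReal (8 * π * B) := by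
        rw [lintegral_add_right _ measurable_const, setLIntegral_const, Real.volume_Ioc,
          add_sub_cancel_left, mul_comm, Measure.volume_eq_prod,
          ← Measure.prod_restrict (μ := volume) (ν := volume),
          lintegral_prod_symm _ hd.aemeasurable]
    _ ≤ ENNReal.ofReal (2 * B * h) + ENNReal.ofReal h * ENNReal.ofReal (8 * π * B) := by
        gcongr
    _ = ENNReal.ofReal ((2 + 8 * π) * B * h) := by
        rw [← ENNReal.ofReal_mul hh.le, ← ENNReal.ofReal_add (by positivity) (by positivity)]
        congr 1; ring

theorem intervalIntegrable_and_circOsc_le {F : ℂ → ℝ} {f : ℝ → ℝ}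
    (hF : ContDiffOn ℝ 1 F (Metric.ball 0 1)) (hf : AEMeasurable f)
    (hlim : ∀ᵐ θ, Tendsto (fun r : ℝ => F (polar (r, θ))) (𝓝[<] 1) (𝓝 (f θ)))
    {a h B : ℝ} (hh : 0 < h) (hh2 : h ≤ 2 * π) (hB : 0 ≤ B)
    (hμ : gradMeasure F (carlesonBox a h) ≤ ENNReal.ofReal (B * h)) :
    IntervalIntegrable f volume a (a + h) ∧ circOsc f a h ≤ (4 + 16 * π) * B := by
  obtain ⟨c, hc⟩ := exists_lintegral_enorm_sub_le hF hlim hh hh2 hB hμ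
  obtain ⟨hfi, hint⟩ :=
    intervalIntegrable_and_integral_abs_sub_le hf (by linarith) (by positivity) hc
  refine ⟨hfi, (circOsc_le_two_div_mul_integral_abs_sub c hh hfi).trans ?_⟩
  calc 2 / h * ∫ θ in a..(a + h), |f θ - c| ≤ 2 / h * ((2 + 8 * π) * B * h) := by gcongr
    _ = (4 + 16 * π) * B := by field_simp; ring

/-- If `F ∈ C¹(Δ)` is such that `|∇F| dxdy` is a vanishing Carleson measure on the disk and
`F(re^{iθ})` converges as `r → 1⁻` for a.e. `θ` to `f(e^{iθ})`, then `f ∈ VMO(𝕊)`. -/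
theorem boundary_limit_mem_vmo (F : ℂ → ℝ) (f : ℝ → ℝ)
    (hF : ContDiffOn ℝ 1 F (Metric.ball (0 : ℂ) 1))
    (hcarl : IsVanishingCarleson (gradMeasure F))
    (hper : Function.Periodic f (2 * π))
    (hlim : ∀ᵐ θ : ℝ, Tendsto (fun r : ℝ => F ((r : ℂ) * Complex.exp ((θ : ℂ) * Complex.I)))
      (nhdsWithin 1 (Set.Iio 1)) (nhds (f θ))) :
    IsVMOS f := by
  have hf : AEMeasurable f := aemeasurable_of_ae_tendsto_polar hF.continuousOn hlim
  have hosc := @intervalIntegrable_and_circOsc_le F f hF hf hlim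
  obtain ⟨⟨A, hA⟩, hvan⟩ := hcarl
  have hA' : IsCarleson (gradMeasure F) (max A 0) := fun a h hh hh2 =>
    (hA a h hh hh2).trans (ENNReal.ofReal_le_ofReal (by gcongr; exact le_max_left A 0))
  have hC : 0 < 4 + 16 * π := by positivity
  refine ⟨⟨hper, ?_, (4 + 16 * π) * max A 0, fun a h hh hh2 =>
    (hosc hh hh2 (le_max_right A 0) (hA' a h hh hh2)).2⟩, fun ε hε => ?_⟩
  · exact locallyIntegrable_of_forall_intervalIntegrable two_pi_pos fun a =>
      (hosc two_pi_pos le_rfl (le_max_right A 0) (hA' a _ two_pi_pos le_rfl)).1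
  · obtain ⟨δ, hδ, hvanδ⟩ := hvan (ε / (4 + 16 * π)) (by positivity)
    refine ⟨min δ (2 * π), lt_min hδ two_pi_pos, fun a h hh hhδ => ?_⟩
    calc circOsc f a h ≤ (4 + 16 * π) * (ε / (4 + 16 * π)) :=
          (hosc hh (hhδ.trans (min_le_right _ _)) (by positivity)
            (hvanδ a h hh (hhδ.trans (min_le_left _ _)))).2
      _ = ε := mul_div_cancel₀ ε hC.ne'
end
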